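/- arXiv:1811.05573 — 8 statements merged into one kernel-verified Lean document; each statement's English description precedes it below -/
import Mathlib

section
/- Let Ω ⊂ ℂ be a bounded open set which is the image of the open unit disk 𝔻 under some injective holomorphic map F : 𝔻 → ℂ. Let g : [0,1] → ℝ be continuous with g(0) = 0 < g(1), and define H on the closed unit disk by H(z) = g(|z|)·z/|z| for z ≠ 0 and H(0) = 0. If v₁ : Ω → ℝ is (Lebesgue) integrable with ∫_Ω v₁ dA > 0, then there exists an injective holomorphic map f : 𝔻 → ℂ with f(𝔻) = Ω such that ∫_Ω H(f⁻¹(x)) v₁(x) dA(x) = 0 as a complex number; equivalently, the real and imaginary parts of H ∘ f⁻¹ are both orthogonal to v₁ in L²(Ω). -/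
/-!
Write `φ_a(w) = (w - a) / (1 - ā w)` and `ρ = |J_F| · (v₁ ∘ F)`. For `f = F ∘ φ_{-a}` the change
of variables `x = F w` turns the integral into `M(a) = ∫_𝔻 ρ(w) H(φ_a w) dA(w)`, which depends
continuously on `a` in the closed disc. For `|a| = 1` the map `φ_a` is constant `-a` on `𝔻`, so on
the unit circle `M(a) = -g(1) (∫ρ) a` is a nonzero multiple of the identity. A map of the closed
disc restricting to such a loop of winding number one must vanish: otherwise it would have a
continuous logarithm on the (simply connected) disc, which along the circle would gain `2πi`.
-/

open MeasureTheory Metric Set ComplexConjugate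

noncomputable def mobius (a w : ℂ) : ℂ := (w - a) / (1 - conj a * w)

lemma mobius_denom_ne_zero {a w : ℂ} (ha : ‖a‖ ≤ 1) (hw : ‖w‖ < 1) :
    1 - conj a * w ≠ 0 := by
  have h : ‖conj a * w‖ < 1 := by
    rw [norm_mul, Complex.norm_conj]
    exact (mul_le_of_le_one_left (norm_nonneg w) ha).trans_lt hw
  rw [sub_ne_zero]
  rintro h'
  simp [← h'] at h

lemma sq_norm_sub_add_mul_eq (a w : ℂ) :
    ‖w - a‖ ^ 2 + (1 - ‖a‖ ^ 2) * (1 - ‖w‖ ^ 2) = ‖1 - conj a * w‖ ^ 2 := by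
  simp only [← Complex.normSq_eq_norm_sq, Complex.normSq_apply, Complex.sub_re, Complex.sub_im,
    Complex.mul_re, Complex.mul_im, Complex.conj_re, Complex.conj_im, Complex.one_re,
    Complex.one_im]
  ring

lemma norm_mobius_le_one {a w : ℂ} (ha : ‖a‖ ≤ 1) (hw : ‖w‖ < 1) : ‖mobius a w‖ ≤ 1 := by
  rw [mobius, norm_div, div_le_one (norm_pos_iff.2 (mobius_denom_ne_zero ha hw))]
  refine (sq_le_sq₀ (norm_nonneg _) (norm_nonneg _)).1 ?_
  have : 0 ≤ (1 - ‖a‖ ^ 2) * (1 - ‖w‖ ^ 2) := by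
    apply mul_nonneg <;> nlinarith [norm_nonneg a, norm_nonneg w]
  linarith [sq_norm_sub_add_mul_eq a w]

lemma norm_mobius_lt_one {a w : ℂ} (ha : ‖a‖ < 1) (hw : ‖w‖ < 1) : ‖mobius a w‖ < 1 := by
  rw [mobius, norm_div, div_lt_one (norm_pos_iff.2 (mobius_denom_ne_zero ha.le hw))]
  refine (sq_lt_sq₀ (norm_nonneg _) (norm_nonneg _)).1 ?_
  have : 0 < (1 - ‖a‖ ^ 2) * (1 - ‖w‖ ^ 2) := by
    apply mul_pos <;> nlinarith [norm_nonneg a, norm_nonneg w]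
  linarith [sq_norm_sub_add_mul_eq a w]

lemma mobius_neg_mobius {a w : ℂ} (ha : ‖a‖ < 1) (hw : ‖w‖ < 1) :
    mobius (-a) (mobius a w) = w := by
  have h₁ := mobius_denom_ne_zero ha.le hw
  have h₂ := mobius_denom_ne_zero (a := -a) (by simpa using ha.le) (norm_mobius_lt_one ha hw)
  simp only [mobius, map_neg] at h₂ ⊢
  rw [div_eq_iff h₂]
  field_simp at h₂ ⊢
  ring

lemma mobius_of_norm_eq_one {a w : ℂ} (ha : ‖a‖ = 1) (hw : ‖w‖ < 1) : mobius a w = -a := by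
  have hconj : conj a * a = 1 := by
    rw [mul_comm, Complex.mul_conj, Complex.normSq_eq_norm_sq, ha]; norm_num
  rw [mobius, div_eq_iff (mobius_denom_ne_zero ha.le hw)]
  linear_combination -w * hconj

lemma bijOn_mobius {a : ℂ} (ha : a ∈ ball (0 : ℂ) 1) : BijOn (mobius a) (ball 0 1) (ball 0 1) := by
  rw [mem_ball_zero_iff] at ha
  have hmaps : ∀ {b}, ‖b‖ < 1 → MapsTo (mobius b) (ball 0 1) (ball 0 1) := fun hb w hw ↦
    mem_ball_zero_iff.2 (norm_mobius_lt_one hb (mem_ball_zero_iff.1 hw))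
  refine InvOn.bijOn ⟨fun w hw ↦ ?_, fun w hw ↦ ?_⟩ (hmaps ha) (hmaps (b := -a) (by simpa))
  · exact mobius_neg_mobius ha (mem_ball_zero_iff.1 hw)
  · simpa using mobius_neg_mobius (a := -a) (by simpa) (mem_ball_zero_iff.1 hw)

lemma differentiableOn_mobius {a : ℂ} (ha : ‖a‖ ≤ 1) :
    DifferentiableOn ℂ (mobius a) (ball 0 1) := fun w hw ↦
  (DifferentiableAt.div (c := (· - a)) (d := (1 - conj a * ·)) (by fun_prop) (by fun_prop)
    (mobius_denom_ne_zero ha (mem_ball_zero_iff.1 hw))).differentiableWithinAt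

lemma continuousOn_mobius_left {w : ℂ} (hw : ‖w‖ < 1) :
    ContinuousOn (mobius · w) (closedBall 0 1) := fun a ha ↦
  (ContinuousAt.div (f := (w - ·)) (g := (1 - conj · * w)) (by fun_prop) (by fun_prop)
    (mobius_denom_ne_zero (mem_closedBall_zero_iff.1 ha) hw)).continuousWithinAt

theorem Convex.exists_continuousOn_exp_eq {s : Set ℂ} (hs : Convex ℝ s) {M : ℂ → ℂ}
    (hM : ContinuousOn M s) (hM0 : ∀ z ∈ s, M z ≠ 0) :
    ∃ L : ℂ → ℂ, ContinuousOn L s ∧ ∀ z ∈ s, Complex.exp (L z) = M z := by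
  rcases s.eq_empty_or_nonempty with rfl | ⟨z₀, hz₀⟩
  · exact ⟨0, continuousOn_empty _, by simp⟩
  have := hs.contractibleSpace ⟨z₀, hz₀⟩
  have := hs.locallyPathConnectedSpace
  obtain ⟨L, ⟨-, hL⟩, -⟩ := Complex.isCoveringMapOn_exp.existsUnique_continuousMap_lifts
    ⟨s.domRestrict M, hM.domRestrict⟩ (a₀ := ⟨z₀, hz₀⟩) (Complex.exp_log (hM0 z₀ hz₀))
    fun z ↦ hM0 z z.2
  refine ⟨Function.extend Subtype.val L 0, ?_, fun z hz ↦ ?_⟩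
  · rw [continuousOn_iff_continuous_domRestrict]
    convert L.continuous
    ext z
    exact Subtype.val_injective.extend_apply _ _ z
  · rw [Subtype.val_injective.extend_apply L 0 ⟨z, hz⟩]
    exact congrFun hL ⟨z, hz⟩

theorem exists_mem_ball_eq_zero_of_eqOn_sphere {M : ℂ → ℂ}
    (hM : ContinuousOn M (closedBall 0 1)) {c : ℂ} (hc : c ≠ 0)
    (hMc : ∀ a ∈ sphere (0 : ℂ) 1, M a = c * a) : ∃ z ∈ ball (0 : ℂ) 1, M z = 0 := by
  by_contra! hball
  have hM0 : ∀ z ∈ closedBall (0 : ℂ) 1, M z ≠ 0 := by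
    intro z hz
    rcases (mem_closedBall_iff_norm.1 hz).lt_or_eq with hlt | heq
    · exact hball z (mem_ball_zero_iff.2 (by simpa using hlt))
    · rw [hMc z (by simpa using heq)]
      exact mul_ne_zero hc (by rintro rfl; simp at heq)
  obtain ⟨L, hL, hLM⟩ := (convex_closedBall 0 1).exists_continuousOn_exp_eq hM hM0
  have hcirc : ∀ θ : ℝ, Complex.exp (θ * Complex.I) ∈ sphere (0 : ℂ) 1 := by
    simp [Complex.norm_exp_ofReal_mul_I]
  -- `ψ θ` is a logarithm of `M (e^{iθ}) / e^{iθ} = c`, so it cannot jump, yet `ψ 2π = ψ 0 - 2πi`.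
  set ψ : ℝ → ℂ := fun θ ↦ L (Complex.exp (θ * Complex.I)) - θ * Complex.I
  have hψ : Continuous ψ := by
    refine (hL.comp_continuous (by fun_prop) fun θ ↦ sphere_subset_closedBall (hcirc θ)).sub ?_
    fun_prop
  have hψc : ∀ θ, Complex.exp (ψ θ) = c := fun θ ↦ by
    rw [Complex.exp_sub, hLM _ (sphere_subset_closedBall (hcirc θ)), hMc _ (hcirc θ),
      mul_div_cancel_right₀ _ (Complex.exp_ne_zero _)]
  have := Complex.isCoveringMap_exp.const_of_comp hψ
    (fun θ θ' ↦ Subtype.ext (by simp only [hψc])) (2 * Real.pi) 0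
  simp [ψ, Complex.exp_two_pi_mul_I, Real.pi_ne_zero, Complex.I_ne_zero] at this

section MobiusAverage

variable {ρ : ℂ → ℝ} {K : ℂ → ℂ}

lemma continuousOn_integral_mobius (hρ : IntegrableOn ρ (ball 0 1))
    (hK : ContinuousOn K (closedBall 0 1)) :
    ContinuousOn (fun a ↦ ∫ w in ball (0 : ℂ) 1, ρ w • K (mobius a w)) (closedBall 0 1) := by
  obtain ⟨C, hC⟩ := (isCompact_closedBall (0 : ℂ) 1).exists_bound_of_continuousOn hK
  have hmem : ∀ a ∈ closedBall (0 : ℂ) 1, ∀ w ∈ ball (0 : ℂ) 1, mobius a w ∈ closedBall 0 1 :=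
    fun a ha w hw ↦ mem_closedBall_zero_iff.2
      (norm_mobius_le_one (mem_closedBall_zero_iff.1 ha) (mem_ball_zero_iff.1 hw))
  refine continuousOn_of_dominated (bound := fun w ↦ |ρ w| * C) (fun a ha ↦ ?_) (fun a ha ↦ ?_)
    (hρ.abs.mul_const C) ?_
  · exact hρ.aestronglyMeasurable.smul <| ContinuousOn.aestronglyMeasurable
      (hK.comp (differentiableOn_mobius (mem_closedBall_zero_iff.1 ha)).continuousOn (hmem a ha))
      measurableSet_ball
  · refine (ae_restrict_iff' measurableSet_ball).2 (Filter.Eventually.of_forall fun w hw ↦ ?_)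
    rw [norm_smul, Real.norm_eq_abs]
    exact mul_le_mul_of_nonneg_left (hC _ (hmem a ha w hw)) (abs_nonneg _)
  · refine (ae_restrict_iff' measurableSet_ball).2 (Filter.Eventually.of_forall fun w hw ↦ ?_)
    exact (continuousOn_const (c := ρ w)).smul
      (hK.comp (continuousOn_mobius_left (mem_ball_zero_iff.1 hw)) fun a ha ↦ hmem a ha w hw)

lemma integral_mobius_of_norm_eq_one {a : ℂ} (ha : ‖a‖ = 1) :
    ∫ w in ball (0 : ℂ) 1, ρ w • K (mobius a w) = (∫ w in ball (0 : ℂ) 1, ρ w) • K (-a) := by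
  rw [← integral_smul_const]
  exact setIntegral_congr_fun measurableSet_ball fun w hw ↦ by
    rw [mobius_of_norm_eq_one ha (mem_ball_zero_iff.1 hw)]

theorem exists_integral_mobius_eq_zero (hρ : IntegrableOn ρ (ball 0 1))
    (hρ0 : ∫ w in ball (0 : ℂ) 1, ρ w ≠ 0) (hK : ContinuousOn K (closedBall 0 1)) {k : ℂ}
    (hk : k ≠ 0) (hKk : ∀ a ∈ sphere (0 : ℂ) 1, K a = k * a) :
    ∃ a ∈ ball (0 : ℂ) 1, ∫ w in ball (0 : ℂ) 1, ρ w • K (mobius a w) = 0 := by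
  refine exists_mem_ball_eq_zero_of_eqOn_sphere (continuousOn_integral_mobius hρ hK)
    (c := -((∫ w in ball (0 : ℂ) 1, ρ w) * k)) ?_ fun a ha ↦ ?_
  · exact neg_ne_zero.2 (mul_ne_zero (by exact_mod_cast hρ0) hk)
  · rw [integral_mobius_of_norm_eq_one (by simpa using ha), hKk (-a) (by simpa using ha),
      Complex.real_smul]
    ring

end MobiusAverage

lemma continuousOn_closedBall_of_radial {g : ℝ → ℝ} {H : ℂ → ℂ} {r : ℝ}
    (hg : ContinuousOn g (Icc 0 r)) (hg0 : g 0 = 0)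
    (hH : ∀ z : ℂ, z ≠ 0 → H z = (g ‖z‖ : ℂ) * z / (‖z‖ : ℂ)) (hH0 : H 0 = 0) :
    ContinuousOn H (closedBall 0 r) := by
  have hgn : ContinuousOn (fun w : ℂ ↦ g ‖w‖) (closedBall 0 r) :=
    hg.comp continuous_norm.continuousOn fun w hw ↦ ⟨norm_nonneg w, mem_closedBall_zero_iff.1 hw⟩
  intro z hz
  rcases eq_or_ne z 0 with rfl | hz0
  · have hnorm : ∀ w, ‖H w‖ = |g ‖w‖| := by
      intro w
      rcases eq_or_ne w 0 with rfl | hw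
      · simp [hH0, hg0]
      · rw [hH w hw, norm_div, norm_mul]
        simp [norm_ne_zero_iff.2 hw]
    rw [ContinuousWithinAt, hH0, tendsto_zero_iff_norm_tendsto_zero]
    simp_rw [hnorm]
    simpa [hg0] using (hgn 0 hz).abs.tendsto
  · have : ContinuousWithinAt (fun w : ℂ ↦ (g ‖w‖ : ℂ) * w / (‖w‖ : ℂ)) (closedBall 0 r) z :=
      ((Complex.continuous_ofReal.continuousAt.comp_continuousWithinAt (hgn z hz)).mul
        continuousWithinAt_id).div (by fun_prop) (by simpa)
    exact this.congr_of_eventuallyEq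
      (eventually_nhdsWithin_of_eventually_nhds (eventually_ne_nhds hz0) |>.mono fun w hw ↦ hH w hw)
      (hH z hz0)

theorem center_of_mass_general
    (Ω : Set ℂ)
    (F : ℂ → ℂ) (hFhol : DifferentiableOn ℂ F (ball (0:ℂ) 1))
    (hFinj : InjOn F (ball (0:ℂ) 1)) (hFim : F '' (ball (0:ℂ) 1) = Ω)
    (g : ℝ → ℝ) (hg : ContinuousOn g (Icc (0:ℝ) 1))
    (hg0 : g 0 = 0) (hg1 : 0 < g 1)
    (H : ℂ → ℂ)
    (hH : ∀ z : ℂ, z ≠ 0 → H z = (g ‖z‖ : ℂ) * z / (‖z‖ : ℂ))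
    (hH0 : H 0 = 0)
    (v₁ : ℂ → ℝ) (hv₁ : IntegrableOn v₁ Ω volume)
    (hv₁pos : 0 < ∫ x in Ω, v₁ x) :
    ∃ f : ℂ → ℂ, DifferentiableOn ℂ f (ball (0:ℂ) 1) ∧
      InjOn f (ball (0:ℂ) 1) ∧ f '' (ball (0:ℂ) 1) = Ω ∧
      ∫ x in Ω, (v₁ x : ℂ) * H (Function.invFunOn f (ball (0:ℂ) 1) x) = 0 := by
  set D := ball (0 : ℂ) 1
  have hF' : ∀ w ∈ D, HasFDerivWithinAt F (fderiv ℝ F w) D w := fun w hw ↦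
    ((hFhol.differentiableAt (isOpen_ball.mem_nhds hw)).restrictScalars ℝ).hasFDerivAt
      |>.hasFDerivWithinAt
  have hcov : ∀ {E : Type} [NormedAddCommGroup E] [NormedSpace ℝ E] (φ : ℂ → E),
      ∫ x in F '' D, φ x = ∫ w in D, |(fderiv ℝ F w).det| • φ (F w) :=
    integral_image_eq_integral_abs_det_fderiv_smul volume measurableSet_ball hF' hFinj
  set ρ : ℂ → ℝ := fun w ↦ |(fderiv ℝ F w).det| * v₁ (F w)
  have hρ : IntegrableOn ρ D := by
    simpa [ρ] using (integrableOn_image_iff_integrableOn_abs_det_fderiv_smul volume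
      measurableSet_ball hF' hFinj v₁).1 (hFim ▸ hv₁)
  have hρ0 : ∫ w in D, ρ w = ∫ x in Ω, v₁ x := by rw [← hFim, hcov]; rfl
  have hHk : ∀ a ∈ sphere (0 : ℂ) 1, H a = g 1 * a := fun a ha ↦ by
    rw [mem_sphere_zero_iff_norm] at ha
    rw [hH a (by rintro rfl; simp at ha), ha]
    simp
  obtain ⟨a, ha, hzero⟩ := exists_integral_mobius_eq_zero hρ (hρ0 ▸ hv₁pos.ne')
    (continuousOn_closedBall_of_radial hg hg0 hH hH0) (by exact_mod_cast hg1.ne') hHk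
  have ha' : -a ∈ D := by simpa [D] using ha
  have hbij := bijOn_mobius ha'
  have hinj : InjOn (F ∘ mobius (-a)) D := hFinj.comp hbij.injOn hbij.mapsTo
  refine ⟨F ∘ mobius (-a),
    hFhol.comp (differentiableOn_mobius (mem_ball_zero_iff.1 ha').le) hbij.mapsTo, hinj,
    by rw [image_comp, hbij.image_eq, hFim], ?_⟩
  rw [← hzero, ← hFim, hcov]
  refine setIntegral_congr_fun measurableSet_ball fun w hw ↦ ?_
  have hFw : F w = (F ∘ mobius (-a)) (mobius a w) := by
    simp [mobius_neg_mobius (mem_ball_zero_iff.1 ha) (mem_ball_zero_iff.1 hw)]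
  rw [hFw, hinj.leftInvOn_invFunOn ((bijOn_mobius ha).mapsTo hw), ← hFw, Complex.real_smul,
    Complex.real_smul]
  push_cast [ρ]
  ring

/-- Center of mass lemma. If `Ω` is a bounded open subset of `ℂ`
that is the image of the unit disk under an injective holomorphic map, `g` is
continuous on `[0,1]` with `g 0 = 0 < g 1`, `H z = g |z| · z / |z|` (and
`H 0 = 0`), and `v₁` is integrable on `Ω` with positive integral, then there is
an injective holomorphic `f : 𝔻 → ℂ` onto `Ω` such that `H ∘ f⁻¹` is
orthogonal to `v₁` (as a complex-valued identity). -/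
theorem center_of_mass
    (Ω : Set ℂ) (hΩopen : IsOpen Ω) (hΩbdd : Bornology.IsBounded Ω)
    (F : ℂ → ℂ) (hFhol : DifferentiableOn ℂ F (ball (0:ℂ) 1))
    (hFinj : InjOn F (ball (0:ℂ) 1)) (hFim : F '' (ball (0:ℂ) 1) = Ω)
    (g : ℝ → ℝ) (hg : ContinuousOn g (Icc (0:ℝ) 1))
    (hg0 : g 0 = 0) (hg1 : 0 < g 1)
    (H : ℂ → ℂ)
    (hH : ∀ z : ℂ, z ≠ 0 → H z = (g ‖z‖ : ℂ) * z / (‖z‖ : ℂ))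
    (hH0 : H 0 = 0)
    (v₁ : ℂ → ℝ) (hv₁ : IntegrableOn v₁ Ω volume)
    (hv₁pos : 0 < ∫ x in Ω, v₁ x) :
    ∃ f : ℂ → ℂ, DifferentiableOn ℂ f (ball (0:ℂ) 1) ∧
      InjOn f (ball (0:ℂ) 1) ∧ f '' (ball (0:ℂ) 1) = Ω ∧
      ∫ x in Ω, (v₁ x : ℂ) * H (Function.invFunOn f (ball (0:ℂ) 1) x) = 0 :=
  center_of_mass_general Ω F hFhol hFinj hFim g hg hg0 hg1 H hH hH0 v₁ hv₁ hv₁pos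
end

section
/- Let Ω ⊂ ℂ be a bounded open set, F : 𝔻 → ℂ an injective holomorphic map with F(𝔻) = Ω, g : [0,1] → ℝ continuous with g(0) = 0, and define H on the closed unit disk by H(z) = g(|z|)·z/|z| for z ≠ 0, H(0) = 0. For ζ in the closed unit disk and z ∈ 𝔻 set M_ζ(z) = (z + ζ)/(1 + z·conj(ζ)). If v₁ : Ω → ℝ is integrable, then the function V(ζ) = ∫_Ω H(M_ζ(F⁻¹(x))) v₁(x) dA(x) is well defined and continuous on the closed unit disk, and for every ζ with |ζ| = 1 one has V(ζ) = g(1)·ζ·∫_Ω v₁ dA. -/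
/-!
For `‖ζ‖ ≤ 1` the Möbius map `M_ζ` sends the open disk into the closed disk, because
`‖1 + z conj ζ‖² - ‖z + ζ‖² = (1 - ‖z‖²)(1 - ‖ζ‖²)`, and it depends continuously on `(ζ, z)`.
The radial field `H` is continuous on the closed disk (at `0` because `g 0 = 0`) and bounded there
by `sup |g|`, so the integrand is dominated by `C |v₁|` and dominated convergence gives continuity
of `V`; measurability of the integrand comes from the open mapping theorem, which makes `F⁻¹`
continuous on `Ω`. For `‖ζ‖ = 1` we have `z + ζ = ζ (1 + z conj ζ)`, so `M_ζ ≡ ζ` on the disk and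
the integrand is the constant `g(1) ζ` times `v₁`.
-/

open MeasureTheory Metric Set Function
open scoped ComplexConjugate

noncomputable def diskMobius (ζ z : ℂ) : ℂ := (z + ζ) / (1 + z * conj ζ)

section DiskMobius

variable {ζ z : ℂ}

theorem one_add_mul_conj_ne_zero (hζ : ‖ζ‖ ≤ 1) (hz : ‖z‖ < 1) : 1 + z * conj ζ ≠ 0 := by
  intro h
  have hlt : ‖z * conj ζ‖ < 1 := by
    rw [norm_mul, Complex.norm_conj]
    nlinarith [norm_nonneg z, norm_nonneg ζ]
  rw [show z * conj ζ = -1 by linear_combination h] at hlt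
  simp at hlt

theorem norm_sq_one_add_mul_conj_sub_norm_sq_add (ζ z : ℂ) :
    ‖1 + z * conj ζ‖ ^ 2 - ‖z + ζ‖ ^ 2 = (1 - ‖z‖ ^ 2) * (1 - ‖ζ‖ ^ 2) := by
  simp only [← Complex.normSq_eq_norm_sq, Complex.normSq_apply, Complex.add_re, Complex.add_im,
    Complex.one_re, Complex.one_im, Complex.mul_re, Complex.mul_im, Complex.conj_re,
    Complex.conj_im]
  ring

theorem norm_diskMobius_le_one (hζ : ‖ζ‖ ≤ 1) (hz : ‖z‖ < 1) : ‖diskMobius ζ z‖ ≤ 1 := by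
  have hden := one_add_mul_conj_ne_zero hζ hz
  rw [diskMobius, norm_div, div_le_one (norm_pos_iff.2 hden)]
  have hnonneg : 0 ≤ (1 - ‖z‖ ^ 2) * (1 - ‖ζ‖ ^ 2) :=
    mul_nonneg (by nlinarith [norm_nonneg z]) (by nlinarith [norm_nonneg ζ])
  have hid := norm_sq_one_add_mul_conj_sub_norm_sq_add ζ z
  exact (sq_le_sq₀ (norm_nonneg _) (norm_nonneg _)).1 (by linarith)

theorem diskMobius_of_norm_eq_one (hζ : ‖ζ‖ = 1) (hz : ‖z‖ < 1) : diskMobius ζ z = ζ := by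
  rw [diskMobius, div_eq_iff (one_add_mul_conj_ne_zero hζ.le hz)]
  have hζζ : ζ * conj ζ = 1 := by
    rw [Complex.mul_conj, Complex.normSq_eq_norm_sq, hζ]
    norm_num
  linear_combination (-z) * hζζ

theorem continuousOn_diskMobius :
    ContinuousOn (uncurry diskMobius) (closedBall (0 : ℂ) 1 ×ˢ ball 0 1) := by
  refine ContinuousOn.div (by fun_prop) (by fun_prop) ?_
  rintro ⟨ζ, z⟩ ⟨hζ, hz⟩
  exact one_add_mul_conj_ne_zero (mem_closedBall_zero_iff.1 hζ) (mem_ball_zero_iff.1 hz)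

theorem mapsTo_diskMobius :
    MapsTo (uncurry diskMobius) (closedBall (0 : ℂ) 1 ×ˢ ball 0 1) (closedBall 0 1) := by
  rintro ⟨ζ, z⟩ ⟨hζ, hz⟩
  exact mem_closedBall_zero_iff.2
    (norm_diskMobius_le_one (mem_closedBall_zero_iff.1 hζ) (mem_ball_zero_iff.1 hz))

end DiskMobius

section RadialField

/-- At `z = 0` the division by `‖z‖ = 0` makes this `0`. -/
noncomputable def radialField (g : ℝ → ℝ) (z : ℂ) : ℂ := g ‖z‖ * z / ‖z‖

variable {g : ℝ → ℝ}

theorem norm_radialField_le (g : ℝ → ℝ) (z : ℂ) : ‖radialField g z‖ ≤ |g ‖z‖| := by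
  rcases eq_or_ne z 0 with rfl | hz
  · simp [radialField]
  · rw [radialField, norm_div, norm_mul, Complex.norm_real, Complex.norm_real, norm_norm,
      Real.norm_eq_abs, mul_div_assoc, div_self (norm_ne_zero_iff.2 hz), mul_one]

theorem radialField_of_norm_eq_one {z : ℂ} (hz : ‖z‖ = 1) : radialField g z = g 1 * z := by
  simp [radialField, hz]

theorem continuousOn_radialField {r : ℝ} (hg : ContinuousOn g (Icc 0 r)) (hg0 : g 0 = 0) :
    ContinuousOn (radialField g) (closedBall 0 r) := by
  have hgn : ContinuousOn (fun w : ℂ => g ‖w‖) (closedBall 0 r) :=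
    hg.comp continuous_norm.continuousOn fun w hw => ⟨norm_nonneg w, mem_closedBall_zero_iff.1 hw⟩
  intro w hw
  rcases eq_or_ne w 0 with rfl | hw0
  · have hlim :
        Filter.Tendsto (fun v : ℂ => |g ‖v‖|) (nhdsWithin 0 (closedBall 0 r)) (nhds 0) := by
      simpa [hg0] using (hgn 0 hw).tendsto.abs
    rw [ContinuousWithinAt, show radialField g 0 = 0 by simp [radialField],
      tendsto_zero_iff_norm_tendsto_zero]
    exact squeeze_zero (fun v => norm_nonneg _) (norm_radialField_le g) hlim
  · exact ((Complex.continuous_ofReal.comp_continuousOn hgn).mul continuousOn_id w hw).div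
      (Complex.continuous_ofReal.comp continuous_norm).continuousWithinAt (by simpa using hw0)

theorem continuousOn_radialField_diskMobius_comp {α : Type*} [TopologicalSpace α] {G : α → ℂ}
    {Ω : Set α} (hg : ContinuousOn g (Icc 0 1)) (hg0 : g 0 = 0) (hG : ContinuousOn G Ω)
    (hGΩ : MapsTo G Ω (ball 0 1)) :
    ContinuousOn (fun p : ℂ × α => radialField g (diskMobius p.1 (G p.2)))
      (closedBall 0 1 ×ˢ Ω) := by
  have hζG : MapsTo (fun p : ℂ × α => (p.1, G p.2)) (closedBall 0 1 ×ˢ Ω)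
      (closedBall 0 1 ×ˢ ball 0 1) := fun p hp => ⟨hp.1, hGΩ hp.2⟩
  exact (continuousOn_radialField hg hg0).comp (continuousOn_diskMobius.comp
    (continuousOn_fst.prodMk (hG.comp continuousOn_snd fun p hp => hp.2)) hζG)
    (mapsTo_diskMobius.comp hζG)

end RadialField

theorem Set.InjOn.continuousOn_invFunOn_image {α β : Type*} [TopologicalSpace α]
    [TopologicalSpace β] [Nonempty α] {f : α → β} {s : Set α} (hf : InjOn f s) (hs : IsOpen s)
    (hopen : ∀ t ⊆ s, IsOpen t → IsOpen (f '' t)) : ContinuousOn (invFunOn f s) (f '' s) := by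
  refine continuousOn_iff'.2 fun U hU =>
    ⟨f '' (U ∩ s), hopen _ inter_subset_right (hU.inter hs), ?_⟩
  ext x
  constructor
  · rintro ⟨hxU, z, hz, rfl⟩
    rw [mem_preimage, hf.leftInvOn_invFunOn hz] at hxU
    exact ⟨⟨z, ⟨hxU, hz⟩, rfl⟩, z, hz, rfl⟩
  · rintro ⟨⟨z, ⟨hzU, hz⟩, rfl⟩, -⟩
    refine ⟨?_, z, hz, rfl⟩
    rwa [mem_preimage, hf.leftInvOn_invFunOn hz]

theorem DifferentiableOn.continuousOn_invFunOn_image {f : ℂ → ℂ} {U : Set ℂ}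
    (hf : DifferentiableOn ℂ f U) (hU : IsOpen U) (hUc : IsPreconnected U) (hinj : InjOn f U) :
    ContinuousOn (invFunOn f U) (f '' U) := by
  rcases (hf.analyticOnNhd hU).is_constant_or_isOpen hUc with ⟨w, hw⟩ | hopen
  · exact (subsingleton_singleton.anti (image_subset_iff.2 hw)).continuousOn _
  · exact hinj.continuousOn_invFunOn_image hU hopen

theorem continuousOn_setIntegral_mul_of_bounded {X Y : Type*} [TopologicalSpace X]
    [FirstCountableTopology X] [TopologicalSpace Y] [MeasurableSpace Y] [OpensMeasurableSpace Y] {μ : Measure Y} {K : Set X}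
    {Ω : Set Y} (hΩ : MeasurableSet Ω) {Φ : X → Y → ℂ} {C : ℝ}
    (hΦ : ContinuousOn (uncurry Φ) (K ×ˢ Ω)) (hΦC : ∀ ζ ∈ K, ∀ x ∈ Ω, ‖Φ ζ x‖ ≤ C)
    {v : Y → ℝ} (hv : IntegrableOn v Ω μ) :
    ContinuousOn (fun ζ => ∫ x in Ω, Φ ζ x * v x ∂μ) K := by
  refine continuousOn_of_dominated (bound := fun x => C * |v x|) (fun ζ hζ => ?_) (fun ζ hζ => ?_)
    (hv.norm.const_mul C) ?_
  · have hΦζ : ContinuousOn (Φ ζ) Ω :=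
      hΦ.comp (Continuous.prodMk_right ζ).continuousOn fun x hx => ⟨hζ, hx⟩
    exact (hΦζ.aestronglyMeasurable hΩ).mul
      (Complex.continuous_ofReal.comp_aestronglyMeasurable hv.aestronglyMeasurable)
  · filter_upwards [ae_restrict_mem hΩ] with x hx
    rw [norm_mul, Complex.norm_real, Real.norm_eq_abs]
    exact mul_le_mul_of_nonneg_right (hΦC ζ hζ x hx) (abs_nonneg _)
  · filter_upwards [ae_restrict_mem hΩ] with x hx
    exact (hΦ.comp (Continuous.prodMk_left x).continuousOn fun ζ hζ => ⟨hζ, hx⟩).mul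
      continuousOn_const

theorem vector_field_continuous_and_boundary_general
    (Ω : Set ℂ) (hΩopen : IsOpen Ω)
    (F : ℂ → ℂ) (hFhol : DifferentiableOn ℂ F (ball (0:ℂ) 1))
    (hFinj : InjOn F (ball (0:ℂ) 1)) (hFim : F '' (ball (0:ℂ) 1) = Ω)
    (g : ℝ → ℝ) (hg : ContinuousOn g (Icc (0:ℝ) 1)) (hg0 : g 0 = 0)
    (H : ℂ → ℂ)
    (hH : ∀ z : ℂ, z ≠ 0 → H z = (g ‖z‖ : ℂ) * z / (‖z‖ : ℂ))
    (hH0 : H 0 = 0)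
    (M : ℂ → ℂ → ℂ)
    (hM : ∀ ζ z : ℂ, M ζ z = (z + ζ) / (1 + z * (starRingEnd ℂ) ζ))
    (v₁ : ℂ → ℝ) (hv₁ : IntegrableOn v₁ Ω volume)
    (V : ℂ → ℂ)
    (hV : ∀ ζ : ℂ, V ζ =
      ∫ x in Ω, H (M ζ (Function.invFunOn F (ball (0:ℂ) 1) x)) * (v₁ x : ℂ)) :
    ContinuousOn V (closedBall (0:ℂ) 1) ∧
      ∀ ζ : ℂ, ‖ζ‖ = 1 →
        V ζ = (g 1 : ℂ) * ζ * ((∫ x in Ω, v₁ x : ℝ) : ℂ) := by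
  obtain rfl : H = radialField g := funext fun z => by
    rcases eq_or_ne z 0 with rfl | hz
    · simp [hH0, radialField]
    · exact hH z hz
  obtain rfl : M = diskMobius := funext₂ hM
  have hGΩ : MapsTo (invFunOn F (ball (0:ℂ) 1)) Ω (ball 0 1) :=
    hFim ▸ fun x hx => invFunOn_mem hx
  have hG : ContinuousOn (invFunOn F (ball (0:ℂ) 1)) Ω :=
    hFim ▸ hFhol.continuousOn_invFunOn_image isOpen_ball (convex_ball 0 1).isPreconnected hFinj
  generalize invFunOn F (ball (0:ℂ) 1) = G at hV hGΩ hG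
  constructor
  · obtain ⟨C, hC⟩ := isCompact_Icc.exists_bound_of_continuousOn hg
    rw [show V = _ from funext hV]
    refine continuousOn_setIntegral_mul_of_bounded hΩopen.measurableSet
      (continuousOn_radialField_diskMobius_comp hg hg0 hG hGΩ)
      (fun ζ hζ x hx => (norm_radialField_le g _).trans (hC _ ⟨norm_nonneg _, ?_⟩)) hv₁
    exact norm_diskMobius_le_one (mem_closedBall_zero_iff.1 hζ) (mem_ball_zero_iff.1 (hGΩ hx))
  · intro ζ hζ
    have hconst : EqOn (fun x => radialField g (diskMobius ζ (G x)) * v₁ x)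
        (fun x => g 1 * ζ * v₁ x) Ω := fun x hx => by
      simp only [diskMobius_of_norm_eq_one hζ (mem_ball_zero_iff.1 (hGΩ hx)),
        radialField_of_norm_eq_one hζ]
    rw [hV, setIntegral_congr_fun hΩopen.measurableSet hconst, integral_const_mul,
      integral_complex_ofReal]

/-- The vector field `V(ζ) = ∫_Ω H(M_ζ(F⁻¹ x)) v₁(x) dA(x)` is
continuous on the closed unit disk, and on the unit circle it equals
`g(1) · ζ · ∫_Ω v₁`. -/
theorem vector_field_continuous_and_boundary
    (Ω : Set ℂ) (hΩopen : IsOpen Ω) (hΩbdd : Bornology.IsBounded Ω)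
    (F : ℂ → ℂ) (hFhol : DifferentiableOn ℂ F (ball (0:ℂ) 1))
    (hFinj : InjOn F (ball (0:ℂ) 1)) (hFim : F '' (ball (0:ℂ) 1) = Ω)
    (g : ℝ → ℝ) (hg : ContinuousOn g (Icc (0:ℝ) 1)) (hg0 : g 0 = 0)
    (H : ℂ → ℂ)
    (hH : ∀ z : ℂ, z ≠ 0 → H z = (g ‖z‖ : ℂ) * z / (‖z‖ : ℂ))
    (hH0 : H 0 = 0)
    (M : ℂ → ℂ → ℂ)
    (hM : ∀ ζ z : ℂ, M ζ z = (z + ζ) / (1 + z * (starRingEnd ℂ) ζ))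
    (v₁ : ℂ → ℝ) (hv₁ : IntegrableOn v₁ Ω volume)
    (V : ℂ → ℂ)
    (hV : ∀ ζ : ℂ, V ζ =
      ∫ x in Ω, H (M ζ (Function.invFunOn F (ball (0:ℂ) 1) x)) * (v₁ x : ℂ)) :
    ContinuousOn V (closedBall (0:ℂ) 1) ∧
      ∀ ζ : ℂ, ‖ζ‖ = 1 →
        V ζ = (g 1 : ℂ) * ζ * ((∫ x in Ω, v₁ x : ℝ) : ℂ) :=
  vector_field_continuous_and_boundary_general Ω hΩopen F hFhol hFinj hFim g hg hg0 H hH hH0 M hM v₁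
    hv₁ V hV
end

section
/- Let f be holomorphic on the open unit disk 𝔻 and suppose f is not affine, i.e., its derivative f′ is not constant on 𝔻. Then the mean value function M(r) = (π r²)⁻¹ ∫_{D(r)} |f′(z)|² dA(z) is strictly increasing on (0,1). (For general holomorphic f, M is nondecreasing on (0,1).) -/
/-!
If `g = f′ = ∑ aₙ zⁿ` on the unit disk, the monomials `zⁿ` are orthogonal in `L²(D(r))`
(integrate in polar coordinates: the angular integral of `e^{i(n-m)θ}` vanishes unless `n = m`),
and `∫_{D(r)} |z|^{2n} dA = π r^{2n+2} / (n+1)`. Dominated convergence then gives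
`M(r) = ∑ |aₙ|² / (n+1) · r^{2n}`, a power series in `r` with nonnegative coefficients. It is
nondecreasing in `r`, and strictly increasing as soon as some `aₙ` with `n ≥ 1` is nonzero,
which is exactly the case when `f′` is not constant.
-/

open MeasureTheory Metric Set Filter
open scoped Real Topology NNReal ENNReal ComplexConjugate

theorem integral_Ioo_neg_pi_pi_exp_int_mul_I (k : ℤ) :
    ∫ θ in Ioo (-π) π, Complex.exp (k * θ * Complex.I) = if k = 0 then 2 * π else 0 := by
  rw [← integral_Ioc_eq_integral_Ioo,
    ← intervalIntegral.integral_of_le (by linarith [Real.pi_pos])]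
  split_ifs with hk
  · simp [hk]; ring
  have hc : (k : ℂ) * Complex.I ≠ 0 := by simp [hk]
  simp_rw [mul_right_comm _ _ Complex.I]
  rw [integral_exp_mul_complex hc, Complex.ofReal_zero, div_eq_zero_iff, sub_eq_zero]
  left
  rw [← mul_one (Complex.exp (_ * ((-π : ℝ) : ℂ))), ← Complex.exp_int_mul_two_pi_mul_I k,
    ← Complex.exp_add]
  congr 1; push_cast; ring

theorem integral_Ioo_zero_ofReal_pow {r : ℝ} (hr : 0 ≤ r) (k : ℕ) :
    ∫ x in Ioo 0 r, (x : ℂ) ^ k = ((r ^ (k + 1) / (k + 1) : ℝ) : ℂ) := by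
  simp_rw [← Complex.ofReal_pow]
  rw [← integral_Ioc_eq_integral_Ioo, ← intervalIntegral.integral_of_le hr,
    intervalIntegral.integral_ofReal, integral_pow]
  simp

theorem setIntegral_ball_eq_setIntegral_polarCoord {E : Type*} [NormedAddCommGroup E]
    [NormedSpace ℝ E] (h : ℂ → E) (r : ℝ) :
    ∫ z in ball (0 : ℂ) r, h z =
      ∫ p in Ioo 0 r ×ˢ Ioo (-π) π, p.1 • h (Complex.polarCoord.symm p) := by
  have hpolar : Ioo 0 r ×ˢ Ioo (-π) π = (Ioi 0 ×ˢ Ioo (-π) π) ∩ (Ioo 0 r ×ˢ univ) := by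
    ext ⟨ρ, θ⟩
    simp only [mem_prod, mem_Ioo, mem_Ioi, mem_inter_iff, mem_univ]
    tauto
  rw [← integral_indicator measurableSet_ball, ← Complex.integral_comp_polarCoord_symm,
    polarCoord_target, hpolar,
    ← setIntegral_indicator (measurableSet_Ioo.prod MeasurableSet.univ)]
  refine setIntegral_congr_fun (measurableSet_Ioi.prod measurableSet_Ioo) fun p hp ↦ ?_
  have hρ : 0 < p.1 := hp.1
  by_cases hpr : p.1 < r
  · rw [indicator_of_mem (by simpa [abs_of_pos hρ] using hpr),
      indicator_of_mem (by simpa using ⟨hρ, hpr⟩)]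
  · rw [indicator_of_notMem (by simpa [abs_of_pos hρ] using hpr),
      indicator_of_notMem (by simp [hpr]), smul_zero]

theorem polarCoord_symm_pow_mul_conj_pow (p : ℝ × ℝ) (n m : ℕ) :
    Complex.polarCoord.symm p ^ n * conj (Complex.polarCoord.symm p) ^ m =
      p.1 ^ (n + m) * Complex.exp ((n - m : ℤ) * p.2 * Complex.I) := by
  have hsymm : Complex.polarCoord.symm p = p.1 * Complex.exp (p.2 * Complex.I) := by
    simp [Complex.exp_mul_I]
  rw [hsymm, map_mul, Complex.conj_ofReal, ← Complex.exp_conj, map_mul, Complex.conj_ofReal,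
    Complex.conj_I, mul_pow, mul_pow, ← Complex.exp_nat_mul, ← Complex.exp_nat_mul,
    mul_mul_mul_comm, ← pow_add, ← Complex.exp_add]
  congr 2
  push_cast; ring

theorem setIntegral_ball_pow_mul_conj_pow {r : ℝ} (hr : 0 ≤ r) (n m : ℕ) :
    ∫ z in ball (0 : ℂ) r, z ^ n * conj z ^ m =
      if n = m then ((π * r ^ (2 * n + 2) / (n + 1) : ℝ) : ℂ) else 0 := by
  have hintegrand : ∀ p : ℝ × ℝ, p.1 • (Complex.polarCoord.symm p ^ n *
      conj (Complex.polarCoord.symm p) ^ m) =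
        (p.1 : ℂ) ^ (n + m + 1) * Complex.exp ((n - m : ℤ) * p.2 * Complex.I) := by
    intro p
    rw [polarCoord_symm_pow_mul_conj_pow, Complex.real_smul, pow_succ]
    ring
  rw [setIntegral_ball_eq_setIntegral_polarCoord, Measure.volume_eq_prod]
  simp_rw [hintegrand]
  rw [setIntegral_prod_mul (fun ρ : ℝ ↦ (ρ : ℂ) ^ (n + m + 1))
      (fun θ : ℝ ↦ Complex.exp ((n - m : ℤ) * θ * Complex.I)),
    integral_Ioo_zero_ofReal_pow hr, integral_Ioo_neg_pi_pi_exp_int_mul_I]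
  simp_rw [sub_eq_zero, Nat.cast_inj]
  split_ifs with hnm
  · subst hnm
    rw [← Complex.ofReal_mul, Complex.ofReal_inj]
    push_cast
    field_simp
    ring
  · simp

theorem setIntegral_ball_norm_sum_mul_pow_sq {r : ℝ} (hr : 0 ≤ r) (a : ℕ → ℂ)
    (s : Finset ℕ) :
    ∫ z in ball (0 : ℂ) r, ‖∑ n ∈ s, a n * z ^ n‖ ^ 2 =
      ∑ n ∈ s, ‖a n‖ ^ 2 * (π * r ^ (2 * n + 2) / (n + 1)) := by
  have hint : ∀ n m : ℕ,
      Integrable (fun z : ℂ ↦ z ^ n * conj z ^ m) (volume.restrict (ball 0 r)) :=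
    fun n m ↦ ((by fun_prop : Continuous fun z : ℂ ↦ z ^ n * conj z ^ m).locallyIntegrable
      |>.integrableOn_isCompact (isCompact_closedBall 0 r)).mono_set ball_subset_closedBall
  rw [← Complex.ofReal_inj, ← integral_complex_ofReal]
  calc ∫ z in ball (0 : ℂ) r, ((‖∑ n ∈ s, a n * z ^ n‖ ^ 2 : ℝ) : ℂ)
      = ∫ z in ball (0 : ℂ) r,
          ∑ n ∈ s, ∑ m ∈ s, a n * conj (a m) * (z ^ n * conj z ^ m) := by
        refine integral_congr_ae (Eventually.of_forall fun z ↦ ?_)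
        simp only [Complex.ofReal_pow, ← Complex.mul_conj', map_sum, map_mul, map_pow,
          Finset.sum_mul_sum]
        exact Finset.sum_congr rfl fun n _ ↦ Finset.sum_congr rfl fun m _ ↦ by ring
    _ = ∑ n ∈ s, ∑ m ∈ s, a n * conj (a m) * ∫ z in ball (0 : ℂ) r, z ^ n * conj z ^ m := by
        rw [integral_finsetSum _ fun n _ ↦
          integrable_finsetSum _ fun m _ ↦ (hint n m).const_mul _]
        refine Finset.sum_congr rfl fun n _ ↦ ?_
        rw [integral_finsetSum _ fun m _ ↦ (hint n m).const_mul _]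
        exact Finset.sum_congr rfl fun m _ ↦ integral_const_mul _ _
    _ = _ := by
        simp only [setIntegral_ball_pow_mul_conj_pow hr, mul_ite, mul_zero, Finset.sum_ite_eq]
        push_cast
        refine Finset.sum_congr rfl fun n hn ↦ ?_
        rw [if_pos hn, Complex.mul_conj']

theorem FormalMultilinearSeries.norm_sum_coeff_mul_pow_le (p : FormalMultilinearSeries ℂ ℂ ℂ)
    {ρ : ℝ≥0} (hρ : ρ < p.radius) (s : Finset ℕ) {z : ℂ} (hz : ‖z‖ ≤ ρ) :
    ‖∑ n ∈ s, p.coeff n * z ^ n‖ ≤ ∑' n, ‖p n‖ * ρ ^ n := by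
  refine (norm_sum_le _ _).trans <| le_trans (Finset.sum_le_sum fun n _ ↦ ?_) <|
    (p.summable_norm_mul_pow hρ).sum_le_tsum s fun n _ ↦ by positivity
  rw [norm_mul, norm_pow, p.norm_apply_eq_norm_coef]
  gcongr

namespace HasFPowerSeriesOnBall

variable {g : ℂ → ℂ} {p : FormalMultilinearSeries ℂ ℂ ℂ}

theorem tendsto_sum_coeff_mul_pow {R : ℝ≥0∞} (hp : HasFPowerSeriesOnBall g p 0 R) {z : ℂ}
    (hz : z ∈ eball 0 R) :
    Tendsto (fun N ↦ ∑ n ∈ Finset.range N, p.coeff n * z ^ n) atTop (𝓝 (g z)) := by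
  simpa [FormalMultilinearSeries.apply_eq_pow_smul_coeff, mul_comm] using
    (hp.hasSum hz).tendsto_sum_nat

theorem hasSum_setIntegral_ball_norm_sq {R : ℝ≥0} (hp : HasFPowerSeriesOnBall g p 0 R)
    {r : ℝ} (hr : 0 ≤ r) (hrR : r < R) :
    HasSum (fun n ↦ ‖p.coeff n‖ ^ 2 * (π * r ^ (2 * n + 2) / (n + 1)))
      (∫ z in ball (0 : ℂ) r, ‖g z‖ ^ 2) := by
  obtain ⟨ρ, hrρ, hρR⟩ := exists_between hrR
  lift ρ to ℝ≥0 using hr.trans hrρ.le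
  have hρ : (ρ : ℝ≥0∞) < p.radius := (ENNReal.coe_lt_coe.mpr hρR).trans_le hp.r_le
  have : IsFiniteMeasure (volume.restrict (ball (0 : ℂ) r)) :=
    isFiniteMeasure_restrict.mpr measure_ball_lt_top.ne
  have hpartial : Tendsto (fun N ↦ ∫ z in ball (0 : ℂ) r,
      ‖∑ n ∈ Finset.range N, p.coeff n * z ^ n‖ ^ 2) atTop
      (𝓝 (∫ z in ball (0 : ℂ) r, ‖g z‖ ^ 2)) := by
    refine tendsto_integral_of_dominated_convergence (fun _ ↦ (∑' n, ‖p n‖ * (ρ : ℝ) ^ n) ^ 2)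
      (fun N ↦ (by fun_prop : Continuous _).aestronglyMeasurable) (integrable_const _)
      (fun N ↦ ?_) ?_ <;>
      refine (ae_restrict_iff' measurableSet_ball).2 (.of_forall fun z hz ↦ ?_)
    · rw [norm_pow, norm_norm]
      gcongr
      exact p.norm_sum_coeff_mul_pow_le hρ _ (le_of_lt (by simpa using hz.trans hrρ))
    · refine ((hp.tendsto_sum_coeff_mul_pow ?_).norm).pow 2
      rw [eball_coe]
      exact ball_subset_ball hrR.le hz
  simp only [setIntegral_ball_norm_sum_mul_pow_sq hr] at hpartial
  exact (hasSum_iff_tendsto_nat_of_nonneg (fun n ↦ by positivity) _).2 hpartial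

theorem hasSum_mean_norm_sq {R : ℝ≥0} (hp : HasFPowerSeriesOnBall g p 0 R) {r : ℝ}
    (hr : 0 < r) (hrR : r < R) :
    HasSum (fun n ↦ ‖p.coeff n‖ ^ 2 / (n + 1) * r ^ (2 * n))
      ((π * r ^ 2)⁻¹ * ∫ z in ball (0 : ℂ) r, ‖g z‖ ^ 2) := by
  have hterm : (fun n : ℕ ↦ ‖p.coeff n‖ ^ 2 / (n + 1) * r ^ (2 * n)) =
      fun n ↦ (π * r ^ 2)⁻¹ * (‖p.coeff n‖ ^ 2 * (π * r ^ (2 * n + 2) / (n + 1))) := by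
    funext n
    field_simp
    ring
  rw [hterm]
  exact (hp.hasSum_setIntegral_ball_norm_sq hr.le hrR).mul_left _

end HasFPowerSeriesOnBall

/-- The Cauchy power series on the closed disks of radius `< R` all agree, so the one of
radius `R / 2` converges on the whole open disk. -/
theorem DifferentiableOn.exists_hasFPowerSeriesOnBall {E : Type*} [NormedAddCommGroup E]
    [NormedSpace ℂ E] [CompleteSpace E] {g : ℂ → E} {c : ℂ} {R : ℝ≥0}
    (hg : DifferentiableOn ℂ g (ball c R)) (hR : 0 < R) :
    ∃ p : FormalMultilinearSeries ℂ ℂ E, HasFPowerSeriesOnBall g p c R := by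
  have hsmall : ∀ r : ℝ≥0, 0 < r → r < R →
      HasFPowerSeriesOnBall g (cauchyPowerSeries g c r) c r :=
    fun r hr hrR ↦ (hg.mono (closedBall_subset_ball hrR)).hasFPowerSeriesOnBall hr
  have hhalf := hsmall (R / 2) (half_pos hR) (half_lt_self hR)
  refine ⟨cauchyPowerSeries g c ↑(R / 2),
    ⟨ENNReal.le_of_forall_pos_nnreal_lt fun r hr hrR ↦ ?_, by simpa using hR, fun {z} hz ↦ ?_⟩⟩
  · exact (hhalf.exchange_radius (hsmall r hr (by exact_mod_cast hrR))).r_le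
  · obtain ⟨r, hzr, hrR⟩ := exists_between (mem_eball_zero_iff.mp hz)
    lift r to ℝ≥0 using ne_top_of_lt hrR
    exact (hhalf.exchange_radius (hsmall r (pos_of_gt (by exact_mod_cast hzr))
      (by exact_mod_cast hrR))).hasSum (mem_eball_zero_iff.mpr hzr)

theorem HasFPowerSeriesOnBall.eqOn_const_of_coeff_eq_zero {E : Type*} [NormedAddCommGroup E]
    [NormedSpace ℂ E] {g : ℂ → E} {p : FormalMultilinearSeries ℂ ℂ E} {c : ℂ} {R : ℝ≥0∞}
    (hp : HasFPowerSeriesOnBall g p c R) (h : ∀ n ≠ 0, p.coeff n = 0) :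
    EqOn g (fun _ ↦ p.coeff 0) (eball c R) := by
  intro z hz
  have hsum := hp.hasSum (y := z - c) (by simpa [edist_eq_enorm_sub] using hz)
  rw [add_sub_cancel] at hsum
  refine hsum.unique ?_
  convert hasSum_single (f := fun n ↦ p n fun _ ↦ z - c) 0 fun n hn ↦ ?_ using 1
  · simp
  · simp [h n hn]

section PowerSeriesMonotone

variable {F : ℝ → ℝ} {c : ℕ → ℝ} {e : ℕ → ℕ} {s : Set ℝ}

theorem monotoneOn_of_hasSum_mul_pow (hs : s ⊆ Ici 0) (hc : ∀ n, 0 ≤ c n)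
    (hF : ∀ x ∈ s, HasSum (fun n ↦ c n * x ^ e n) (F x)) : MonotoneOn F s :=
  fun x hx y hy hxy ↦ hasSum_le
    (fun n ↦ mul_le_mul_of_nonneg_left (pow_le_pow_left₀ (hs hx) hxy _) (hc n))
    (hF x hx) (hF y hy)

theorem strictMonoOn_of_hasSum_mul_pow (hs : s ⊆ Ici 0) (hc : ∀ n, 0 ≤ c n) {k : ℕ}
    (hk : e k ≠ 0) (hck : 0 < c k) (hF : ∀ x ∈ s, HasSum (fun n ↦ c n * x ^ e n) (F x)) :
    StrictMonoOn F s :=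
  fun x hx y hy hxy ↦ hasSum_lt
    (fun n ↦ mul_le_mul_of_nonneg_left (pow_le_pow_left₀ (hs hx) hxy.le _) (hc n))
    (mul_lt_mul_of_pos_left (pow_lt_pow_left₀ hxy (hs hx) hk) hck) (hF x hx) (hF y hy)

end PowerSeriesMonotone

/-- For `f` holomorphic on the unit disk, the mean value function
`M(r) = (π r²)⁻¹ ∫_{D(r)} |f′|² dA` is nondecreasing on `(0,1)`, and strictly
increasing when the derivative `f′` is not constant on the disk. -/
theorem mean_value_monotone
    (f : ℂ → ℂ) (hf : DifferentiableOn ℂ f (ball (0:ℂ) 1))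
    (M : ℝ → ℝ)
    (hM : ∀ r : ℝ, M r = (π * r^2)⁻¹ *
      ∫ z in ball (0:ℂ) r, ‖deriv f z‖^2) :
    MonotoneOn M (Ioo (0:ℝ) 1) ∧
    ((¬ ∃ c : ℂ, ∀ z ∈ ball (0:ℂ) 1, deriv f z = c) →
      StrictMonoOn M (Ioo (0:ℝ) 1)) := by
  obtain ⟨p, hp⟩ := DifferentiableOn.exists_hasFPowerSeriesOnBall (R := 1)
    (by simpa using hf.deriv isOpen_ball) one_pos
  have hM_hasSum : ∀ r ∈ Ioo (0 : ℝ) 1,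
      HasSum (fun n ↦ ‖p.coeff n‖ ^ 2 / (n + 1) * r ^ (2 * n)) (M r) := fun r hr ↦
    hM r ▸ hp.hasSum_mean_norm_sq hr.1 (by simpa using hr.2)
  have hc : ∀ n : ℕ, 0 ≤ ‖p.coeff n‖ ^ 2 / (n + 1) := fun n ↦ by positivity
  have hs : Ioo (0 : ℝ) 1 ⊆ Ici 0 := fun _ hx ↦ hx.1.le
  refine ⟨monotoneOn_of_hasSum_mul_pow hs hc hM_hasSum, fun hnonconst ↦ ?_⟩
  obtain ⟨k, hk, hak⟩ : ∃ k ≠ 0, p.coeff k ≠ 0 := by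
    by_contra! h
    exact hnonconst ⟨p.coeff 0, fun z hz ↦
      hp.eqOn_const_of_coeff_eq_zero h (by rwa [eball_coe, NNReal.coe_one])⟩
  exact strictMonoOn_of_hasSum_mul_pow hs hc (by omega : 2 * k ≠ 0)
    (div_pos (pow_pos (norm_pos_iff.2 hak) 2) k.cast_add_one_pos) hM_hasSum
end

section
/- Let g : [0,1] → ℝ be continuously differentiable and let f be holomorphic on the open unit disk 𝔻 with ∫_𝔻 |f′(z)|² dA(z) = π. Then ∫_𝔻 g(|z|)² |f′(z)|² dA(z) − ∫_𝔻 g(|z|)² dA(z) = ∫₀¹ 2 g(r) g′(r) · ( π r² − ∫_{D(r)} |f′(z)|² dA(z) ) dr. -/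
open MeasureTheory Metric Set intervalIntegral
open scoped Real

/-!
Write `G = g²`. By the fundamental theorem of calculus `G (‖z‖) = G 1 - ∫_{‖z‖}^1 G'`, so Fubini
on `{(z, r) | ‖z‖ < r ≤ 1}` gives, for every `h` integrable on the disk,
`∫_𝔻 G(‖z‖) h = G(1) ∫_𝔻 h - ∫₀¹ G'(r) ∫_{D(r)} h dr`.
Take `h = |f'|² - 1`: its integral over `𝔻` vanishes because `∫_𝔻 |f'|² = π = |𝔻|`, and
`∫_{D(r)} h = ∫_{D(r)} |f'|² - π r²`.
-/

section Radial

variable {E : Type*} [NormedAddCommGroup E] [MeasurableSpace E] [OpensMeasurableSpace E]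
  {μ : Measure E}

theorem setIntegral_ball_integral_Ioc_norm_mul [SFinite μ] {φ : ℝ → ℝ} {h : E → ℝ} {R : ℝ}
    (hφ : IntegrableOn φ (Ioc 0 R)) (hh : IntegrableOn h (ball 0 R) μ) :
    ∫ z in ball 0 R, (∫ r in Ioc ‖z‖ R, φ r) * h z ∂μ
      = ∫ r in Ioc 0 R, φ r * ∫ z in ball 0 r, h z ∂μ := by
  -- both sides integrate `φ r * h z` over `{(z, r) | ‖z‖ < r ≤ R}`, in the two orders
  set S : Set (E × ℝ) := {q | ‖q.1‖ < q.2}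
  set Ψ : E × ℝ → ℝ := S.indicator fun q => h q.1 * φ q.2
  have hS : MeasurableSet S := measurableSet_lt measurable_fst.norm measurable_snd
  have hΨ : Integrable Ψ ((μ.restrict (ball 0 R)).prod (volume.restrict (Ioc 0 R))) :=
    (hh.mul_prod hφ).indicator hS
  have inner_fst (z : E) : ∫ r in Ioc 0 R, Ψ (z, r) = (∫ r in Ioc ‖z‖ R, φ r) * h z := by
    have : (fun r => Ψ (z, r)) = (Ioi ‖z‖).indicator fun r => φ r * h z := by
      ext r; by_cases hr : ‖z‖ < r <;> simp [Ψ, S, hr, mul_comm]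
    rw [this, setIntegral_indicator measurableSet_Ioi, Ioc_inter_Ioi,
      max_eq_right (norm_nonneg z), MeasureTheory.integral_mul_const]
  have inner_snd :
      ∀ r ∈ Ioc 0 R, ∫ z in ball 0 R, Ψ (z, r) ∂μ = φ r * ∫ z in ball 0 r, h z ∂μ := by
    intro r hr
    have : (fun z => Ψ (z, r)) = (ball 0 r).indicator fun z => φ r * h z := by
      ext z; by_cases hz : ‖z‖ < r <;> simp [Ψ, S, hz, mul_comm]
    rw [this, setIntegral_indicator measurableSet_ball,
      inter_eq_self_of_subset_right (ball_subset_ball hr.2), MeasureTheory.integral_const_mul]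
  calc ∫ z in ball 0 R, (∫ r in Ioc ‖z‖ R, φ r) * h z ∂μ
      = ∫ z in ball 0 R, (∫ r in Ioc 0 R, Ψ (z, r)) ∂μ := by simp_rw [inner_fst]
    _ = ∫ r in Ioc 0 R, ∫ z in ball 0 R, Ψ (z, r) ∂μ := integral_integral_swap hΨ
    _ = ∫ r in Ioc 0 R, φ r * ∫ z in ball 0 r, h z ∂μ :=
      setIntegral_congr_fun measurableSet_Ioc inner_snd

theorem MeasureTheory.IntegrableOn.comp_norm_mul {G : ℝ → ℝ} {h : E → ℝ} {R : ℝ}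
    (hG : ContinuousOn G (Icc 0 R)) (hh : IntegrableOn h (ball 0 R) μ) :
    IntegrableOn (fun z => G ‖z‖ * h z) (ball 0 R) μ := by
  have norm_mem : MapsTo (‖·‖) (ball (0 : E) R) (Icc 0 R) :=
    fun z hz => ⟨norm_nonneg z, (mem_ball_zero_iff.mp hz).le⟩
  obtain ⟨C, hC⟩ := isCompact_Icc.exists_bound_of_continuousOn hG
  exact hh.bdd_mul ((hG.comp continuous_norm.continuousOn norm_mem).aestronglyMeasurable
      measurableSet_ball)
    (ae_restrict_of_forall_mem measurableSet_ball fun z hz => hC _ (norm_mem hz))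

theorem setIntegral_ball_comp_norm_mul [SFinite μ] {G φ : ℝ → ℝ} {h : E → ℝ} {R : ℝ}
    (hG : ∀ x ∈ Icc 0 R, HasDerivWithinAt G (φ x) (Icc 0 R) x) (hφ : ContinuousOn φ (Icc 0 R))
    (hh : IntegrableOn h (ball 0 R) μ) :
    ∫ z in ball 0 R, G ‖z‖ * h z ∂μ
      = G R * ∫ z in ball 0 R, h z ∂μ - ∫ r in Ioc 0 R, φ r * ∫ z in ball 0 r, h z ∂μ := by
  have hGc : ContinuousOn G (Icc 0 R) := fun x hx => (hG x hx).continuousWithinAt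
  have ftc : ∀ z ∈ ball (0 : E) R, ∫ r in Ioc ‖z‖ R, φ r = G R - G ‖z‖ := by
    intro z hz
    have hzR : ‖z‖ ≤ R := (mem_ball_zero_iff.mp hz).le
    have sub : Icc ‖z‖ R ⊆ Icc 0 R := Icc_subset_Icc_left (norm_nonneg z)
    rw [← integral_of_le hzR]
    refine integral_eq_sub_of_hasDeriv_right_of_le hzR (hGc.mono sub) (fun x hx => ?_)
      ((hφ.mono sub).intervalIntegrable_of_Icc hzR)
    have hx0 : x ∈ Ioo 0 R := ⟨(norm_nonneg z).trans_lt hx.1, hx.2⟩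
    exact ((hG x (Ioo_subset_Icc_self hx0)).hasDerivAt
      (Icc_mem_nhds hx0.1 hx0.2)).hasDerivWithinAt
  have layers := setIntegral_ball_integral_Ioc_norm_mul
    ((hφ.integrableOn_Icc).mono_set Ioc_subset_Icc_self) hh
  have split : G R * ∫ z in ball 0 R, h z ∂μ - ∫ z in ball 0 R, G ‖z‖ * h z ∂μ
      = ∫ z in ball 0 R, (∫ r in Ioc ‖z‖ R, φ r) * h z ∂μ := by
    rw [← MeasureTheory.integral_const_mul,
      ← MeasureTheory.integral_sub (hh.const_mul _) (hh.comp_norm_mul hGc)]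
    exact setIntegral_congr_fun measurableSet_ball fun z hz => by rw [ftc z hz]; ring
  linarith

end Radial

theorem Complex.setIntegral_ball_one {r : ℝ} (hr : 0 ≤ r) :
    ∫ _ in ball (0 : ℂ) r, (1 : ℝ) = π * r ^ 2 := by
  rw [setIntegral_const, smul_eq_mul, mul_one, measureReal_def, Complex.volume_ball,
    ENNReal.toReal_mul, ENNReal.toReal_pow, ENNReal.toReal_ofReal hr, ENNReal.coe_toReal,
    NNReal.coe_real_pi, mul_comm]

theorem radial_integration_by_parts_general
    (g g' : ℝ → ℝ)
    (hg : ∀ r ∈ Icc (0:ℝ) 1, HasDerivWithinAt g (g' r) (Icc (0:ℝ) 1) r)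
    (hg' : ContinuousOn g' (Icc (0:ℝ) 1))
    (f : ℂ → ℂ)
    (harea : (∫ z in ball (0:ℂ) 1, (‖deriv f z‖)^2) = π) :
    (∫ z in ball (0:ℂ) 1, (g (‖z‖))^2 * (‖deriv f z‖)^2)
      - (∫ z in ball (0:ℂ) 1, (g (‖z‖))^2)
    = ∫ r in (0:ℝ)..1, 2 * g r * g' r *
        (π * r^2 - ∫ z in ball (0:ℂ) r, (‖deriv f z‖)^2) := by
  have hF : IntegrableOn (fun z => ‖deriv f z‖ ^ 2) (ball (0:ℂ) 1) :=
    .of_integral_ne_zero (harea ▸ Real.pi_ne_zero)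
  have hone (r : ℝ) : IntegrableOn (fun _ => (1:ℝ)) (ball (0:ℂ) r) :=
    integrableOn_const measure_ball_lt_top.ne
  have hgc : ContinuousOn g (Icc 0 1) := fun x hx => (hg x hx).continuousWithinAt
  have hG (x) (hx : x ∈ Icc (0:ℝ) 1) :
      HasDerivWithinAt (fun x => g x ^ 2) (2 * g x * g' x) (Icc 0 1) x := by
    simpa [mul_comm] using (hg x hx).fun_pow 2
  have excess (r) (hr : r ∈ Ioc (0:ℝ) 1) : ∫ z in ball (0:ℂ) r, (‖deriv f z‖ ^ 2 - 1)
      = -(π * r ^ 2 - ∫ z in ball (0:ℂ) r, ‖deriv f z‖ ^ 2) := by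
    rw [MeasureTheory.integral_sub (hF.mono_set (ball_subset_ball hr.2)) (hone r),
      Complex.setIntegral_ball_one hr.1.le, neg_sub]
  have key := setIntegral_ball_comp_norm_mul (h := fun z => ‖deriv f z‖ ^ 2 - 1) hG
    ((continuousOn_const.mul hgc).mul hg') (hF.sub (hone 1))
  calc _ = ∫ z in ball (0:ℂ) 1, g ‖z‖ ^ 2 * (‖deriv f z‖ ^ 2 - 1) := by
        have hg_sq_F : IntegrableOn (fun z => g ‖z‖ ^ 2 * ‖deriv f z‖ ^ 2) (ball (0:ℂ) 1) :=
          hF.comp_norm_mul (hgc.pow 2)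
        have hg_sq : IntegrableOn (fun z => g ‖z‖ ^ 2) (ball (0:ℂ) 1) := by
          simpa using (hone 1).comp_norm_mul (hgc.pow 2)
        rw [← MeasureTheory.integral_sub hg_sq_F hg_sq]
        simp only [mul_sub, mul_one]
    _ = -∫ r in Ioc 0 1, 2 * g r * g' r * ∫ z in ball (0:ℂ) r, (‖deriv f z‖ ^ 2 - 1) := by
        rw [key, excess 1 ⟨one_pos, le_rfl⟩, harea, one_pow, mul_one, sub_self, neg_zero,
          mul_zero, zero_sub]
    _ = _ := by
        rw [integral_of_le zero_le_one, ← MeasureTheory.integral_neg]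
        exact setIntegral_congr_fun measurableSet_Ioc fun r hr => by rw [excess r hr]; ring

/-- Integration-by-parts identity: for `g` continuously
differentiable on `[0,1]` and `f` holomorphic on the unit disk with
`∫_𝔻 |f′|² dA = π`,
`∫_𝔻 g(|z|)²|f′|² dA − ∫_𝔻 g(|z|)² dA
   = ∫₀¹ 2 g g′ (π r² − ∫_{D(r)} |f′|² dA) dr`. -/
theorem radial_integration_by_parts
    (g g' : ℝ → ℝ)
    (hg : ∀ r ∈ Icc (0:ℝ) 1, HasDerivWithinAt g (g' r) (Icc (0:ℝ) 1) r)
    (hg' : ContinuousOn g' (Icc (0:ℝ) 1))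
    (f : ℂ → ℂ) (hf : DifferentiableOn ℂ f (ball (0:ℂ) 1))
    (harea : (∫ z in ball (0:ℂ) 1, (‖deriv f z‖)^2) = π) :
    (∫ z in ball (0:ℂ) 1, (g (‖z‖))^2 * (‖deriv f z‖)^2)
      - (∫ z in ball (0:ℂ) 1, (g (‖z‖))^2)
    = ∫ r in (0:ℝ)..1, 2 * g r * g' r *
        (π * r^2 - ∫ z in ball (0:ℂ) r, (‖deriv f z‖)^2) :=
  radial_integration_by_parts_general g g' hg hg' f harea
end

section
/- Let M : [0,1] → ℝ be continuous and strictly increasing with M(1) = 1, and let G : [0,1] → ℝ be continuously differentiable with G(0) = 0 and G(1) ≥ 0. Suppose there exists r₀ ∈ (0,1) such that G′(r) > 0 for r ∈ (0, r₀) and G′(r) < 0 for r ∈ (r₀, 1). Then G(r) > 0 for every r ∈ (0,1), and ∫₀¹ G′(r) (1 − M(r)) dr > 0. -/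
open MeasureTheory Set intervalIntegral

/-- If `M` is continuous and strictly increasing on `[0,1]` with
`M 1 = 1`, and `G` is continuously differentiable with `G 0 = 0`, `G 1 ≥ 0`,
with `G′ > 0` on `(0,r₀)` and `G′ < 0` on `(r₀,1)` for some `r₀ ∈ (0,1)`,
then `G > 0` on `(0,1)` and `∫₀¹ G′ (1 − M) dr > 0`. -/
theorem positive_bump_integral
    (M : ℝ → ℝ) (hMcont : ContinuousOn M (Icc (0:ℝ) 1))
    (hMmono : StrictMonoOn M (Icc (0:ℝ) 1)) (hM1 : M 1 = 1)
    (G G' : ℝ → ℝ)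
    (hG : ∀ r ∈ Icc (0:ℝ) 1, HasDerivWithinAt G (G' r) (Icc (0:ℝ) 1) r)
    (hG'cont : ContinuousOn G' (Icc (0:ℝ) 1))
    (hG0 : G 0 = 0) (hG1 : 0 ≤ G 1)
    (r₀ : ℝ) (hr₀ : r₀ ∈ Ioo (0:ℝ) 1)
    (hpos : ∀ r ∈ Ioo (0:ℝ) r₀, 0 < G' r)
    (hneg : ∀ r ∈ Ioo r₀ 1, G' r < 0) :
    (∀ r ∈ Ioo (0:ℝ) 1, 0 < G r) ∧
      0 < ∫ r in (0:ℝ)..1, G' r * (1 - M r) := by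
  obtain ⟨hr₀0, hr₀1⟩ := hr₀
  have hGc : ContinuousOn G (Icc (0:ℝ) 1) := fun x hx => (hG x hx).continuousWithinAt
  have hDA : ∀ x ∈ Ioo (0:ℝ) 1, HasDerivAt G (G' x) x := fun x hx =>
    (hG x (Ioo_subset_Icc_self hx)).hasDerivAt (Icc_mem_nhds hx.1 hx.2)
  -- strict monotonicity on [0, r₀]
  have hmono : StrictMonoOn G (Icc (0:ℝ) r₀) := by
    apply strictMonoOn_of_deriv_pos (convex_Icc _ _)
      (hGc.mono (Icc_subset_Icc le_rfl hr₀1.le))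
    intro x hx
    rw [interior_Icc] at hx
    have hx1 : x ∈ Ioo (0:ℝ) 1 := ⟨hx.1, hx.2.trans hr₀1⟩
    rw [(hDA x hx1).deriv]
    exact hpos x hx
  -- strict antitonicity on [r₀, 1]
  have hanti : StrictAntiOn G (Icc r₀ 1) := by
    apply strictAntiOn_of_deriv_neg (convex_Icc _ _)
      (hGc.mono (Icc_subset_Icc hr₀0.le le_rfl))
    intro x hx
    rw [interior_Icc] at hx
    have hx1 : x ∈ Ioo (0:ℝ) 1 := ⟨hr₀0.trans hx.1, hx.2⟩
    rw [(hDA x hx1).deriv]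
    exact hneg x hx
  have part1 : ∀ r ∈ Ioo (0:ℝ) 1, 0 < G r := by
    intro r hr
    rcases le_or_gt r r₀ with h | h
    · have := hmono (left_mem_Icc.mpr hr₀0.le) ⟨hr.1.le, h⟩ hr.1
      rwa [hG0] at this
    · have := hanti ⟨h.le, hr.2.le⟩ (right_mem_Icc.mpr hr₀1.le) hr.2
      linarith
  refine ⟨part1, ?_⟩
  set c : ℝ := 1 - M r₀ with hc
  have hr₀Icc : r₀ ∈ Icc (0:ℝ) 1 := ⟨hr₀0.le, hr₀1.le⟩
  have hcpos : 0 < c := by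
    have := hMmono hr₀Icc (right_mem_Icc.mpr zero_le_one) hr₀1
    rw [hM1] at this; linarith
  -- continuity of integrands
  have hK : ContinuousOn (fun r => G' r * (1 - M r)) (Icc (0:ℝ) 1) :=
    hG'cont.mul (continuousOn_const.sub hMcont)
  have hKc : ContinuousOn (fun r => G' r * c) (Icc (0:ℝ) 1) :=
    hG'cont.mul continuousOn_const
  have hsub01 : uIcc (0:ℝ) r₀ ⊆ Icc 0 1 := by
    rw [uIcc_of_le hr₀0.le]; exact Icc_subset_Icc le_rfl hr₀1.le
  have hsub11 : uIcc r₀ (1:ℝ) ⊆ Icc 0 1 := by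
    rw [uIcc_of_le hr₀1.le]; exact Icc_subset_Icc hr₀0.le le_rfl
  have hsubfull : uIcc (0:ℝ) (1:ℝ) ⊆ Icc 0 1 := by
    rw [uIcc_of_le zero_le_one]
  have hiK1 : IntervalIntegrable (fun r => G' r * (1 - M r)) volume 0 r₀ :=
    (hK.mono hsub01).intervalIntegrable
  have hiK2 : IntervalIntegrable (fun r => G' r * (1 - M r)) volume r₀ 1 :=
    (hK.mono hsub11).intervalIntegrable
  have hiKc1 : IntervalIntegrable (fun r => G' r * c) volume 0 r₀ :=
    (hKc.mono hsub01).intervalIntegrable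
  have hiKc2 : IntervalIntegrable (fun r => G' r * c) volume r₀ 1 :=
    (hKc.mono hsub11).intervalIntegrable
  have hiG' : IntervalIntegrable G' volume 0 1 :=
    (hG'cont.mono hsubfull).intervalIntegrable
  -- strict comparison on [0, r₀]
  have h1 : ∫ r in (0:ℝ)..r₀, G' r * c < ∫ r in (0:ℝ)..r₀, G' r * (1 - M r) := by
    rw [← sub_pos, ← intervalIntegral.integral_sub hiK1 hiKc1]
    apply intervalIntegral_pos_of_pos_on (hiK1.sub hiKc1) _ hr₀0
    intro x hx
    have hxI : x ∈ Icc (0:ℝ) 1 := ⟨hx.1.le, (hx.2.trans hr₀1).le⟩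
    have hM : M x < M r₀ := hMmono hxI hr₀Icc hx.2
    have := hpos x hx
    have : 0 < G' x * (M r₀ - M x) := mul_pos this (by linarith)
    simp only [hc]; nlinarith
  -- strict comparison on [r₀, 1]
  have h2 : ∫ r in r₀..1, G' r * c < ∫ r in r₀..1, G' r * (1 - M r) := by
    rw [← sub_pos, ← intervalIntegral.integral_sub hiK2 hiKc2]
    apply intervalIntegral_pos_of_pos_on (hiK2.sub hiKc2) _ hr₀1
    intro x hx
    have hxI : x ∈ Icc (0:ℝ) 1 := ⟨(hr₀0.trans hx.1).le, hx.2.le⟩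
    have hM : M r₀ < M x := hMmono hr₀Icc hxI hx.1
    have := hneg x hx
    have : 0 < G' x * (M r₀ - M x) := mul_pos_of_neg_of_neg this (by linarith)
    simp only [hc]; nlinarith
  -- fundamental theorem: ∫₀¹ G' = G 1
  have hFTC : ∫ r in (0:ℝ)..1, G' r = G 1 := by
    have := intervalIntegral.integral_eq_sub_of_hasDeriv_right_of_le zero_le_one
      hGc
      (fun x hx => (hDA x hx).hasDerivWithinAt) hiG'
    rw [this, hG0, sub_zero]
  have hsplitc : (∫ r in (0:ℝ)..r₀, G' r * c) + ∫ r in r₀..1, G' r * c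
      = c * G 1 := by
    rw [intervalIntegral.integral_add_adjacent_intervals hiKc1 hiKc2]
    simp only [mul_comm (G' _) c]
    rw [intervalIntegral.integral_const_mul, hFTC]
  have hsplit : (∫ r in (0:ℝ)..1, G' r * (1 - M r))
      = (∫ r in (0:ℝ)..r₀, G' r * (1 - M r)) + ∫ r in r₀..1, G' r * (1 - M r) :=
    (intervalIntegral.integral_add_adjacent_intervals hiK1 hiK2).symm
  have hcG1 : 0 ≤ c * G 1 := mul_nonneg hcpos.le hG1
  rw [hsplit]
  linarith
end

section
/- Let F be holomorphic on the open unit disk 𝔻 and let g : [0,1] → ℝ be measurable. Then |F′(0)|² · ∫_𝔻 g(|z|)² dA(z) ≤ ∫_𝔻 g(|z|)² |F′(z)|² dA(z), where both sides are interpreted as (lower Lebesgue) integrals of nonnegative functions with values in [0, ∞]. -/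
/-! Since `(F')²` is holomorphic, its value at `0` is its mean over each circle `θ ↦ e^{iθ} z`,
so `2π |F'(0)|² ≤ ∫₀^{2π} |F'(e^{iθ} z)|² dθ` for every `z` in the disk. Multiply by the radial
weight `g(|z|)²`, integrate over the disk and exchange the integrals (Tonelli): as rotations
preserve both area measure and the weight, the right-hand side becomes
`2π ∫_𝔻 g(|z|)² |F'(z)|² dA`. -/

open MeasureTheory Metric Set

open scoped ENNReal Real

lemma DifferentiableOn.two_pi_mul_enorm_le_lintegral_rotation {E : Type*} [NormedAddCommGroup E]
    [NormedSpace ℂ E] [CompleteSpace E] {f : ℂ → E} {r : ℝ}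
    (hf : DifferentiableOn ℂ f (ball 0 r)) {z : ℂ} (hz : z ∈ ball 0 r) :
    ENNReal.ofReal (2 * π) * ‖f 0‖ₑ ≤ ∫⁻ θ in Ioc 0 (2 * π), ‖f (circleMap 0 1 θ * z)‖ₑ := by
  have hmaps : MapsTo (· * z) (closedBall 0 1) (ball 0 r) := fun w hw => by
    rw [mem_closedBall_zero_iff] at hw
    rw [mem_ball_zero_iff] at hz ⊢
    calc ‖w * z‖ = ‖w‖ * ‖z‖ := norm_mul w z
      _ ≤ ‖z‖ := mul_le_of_le_one_left (norm_nonneg z) hw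
      _ < r := hz
  have hmean : Real.circleAverage (fun w => f (w * z)) 0 1 = f 0 := by
    have hcl : DiffContOnCl ℂ (fun w => f (w * z)) (ball 0 |1|) := by
      refine DifferentiableOn.diffContOnCl ?_
      rw [abs_one, closure_ball 0 one_ne_zero]
      exact hf.comp (differentiableOn_id.mul_const z) hmaps
    simpa using hcl.circleAverage
  have h2π : (0 : ℝ) ≤ 2 * π := by positivity
  calc ENNReal.ofReal (2 * π) * ‖f 0‖ₑ
      = ‖(2 * π) • Real.circleAverage (fun w => f (w * z)) 0 1‖ₑ := by
        rw [hmean, enorm_smul, Real.enorm_of_nonneg h2π]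
    _ = ‖∫ θ in (0)..(2 * π), f (circleMap 0 1 θ * z)‖ₑ := by
        rw [Real.circleAverage_def, smul_inv_smul₀ (by positivity)]
    _ ≤ ∫⁻ θ in Ioc 0 (2 * π), ‖f (circleMap 0 1 θ * z)‖ₑ := by
        rw [intervalIntegral.integral_of_le h2π]
        exact enorm_integral_le_lintegral_enorm _

lemma setLIntegral_ball_comp_circle_mul (φ : ℂ → ℝ≥0∞) (u : Circle) (r : ℝ) :
    ∫⁻ z in ball 0 r, φ (u * z) = ∫⁻ z in ball 0 r, φ z := by
  have hpre : rotation u ⁻¹' ball 0 r = ball 0 r := by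
    ext w
    simp only [mem_preimage, mem_ball_zero_iff, rotation_apply, norm_mul, Circle.norm_coe, one_mul]
  have := (rotation u).measurePreserving.setLIntegral_comp_preimage_emb
    (rotation u).toHomeomorph.measurableEmbedding φ (ball 0 r)
  rw [hpre] at this
  simpa using this

lemma mul_setLIntegral_ball_radial_le {ρ : ℝ → ℝ≥0∞} (hρ : Measurable ρ) {H : ℂ → ℝ≥0∞}
    (hH : Measurable H) {c : ℝ≥0∞} {r : ℝ}
    (hc : ∀ z ∈ ball (0 : ℂ) r,
      ENNReal.ofReal (2 * π) * c ≤ ∫⁻ θ in Ioc 0 (2 * π), H (circleMap 0 1 θ * z)) :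
    c * ∫⁻ z in ball (0 : ℂ) r, ρ ‖z‖ ≤ ∫⁻ z in ball 0 r, ρ ‖z‖ * H z := by
  have h2π : ENNReal.ofReal (2 * π) ≠ 0 := by simp [Real.pi_pos]
  have hinv : ∀ θ, ∫⁻ z in ball 0 r, ρ ‖z‖ * H (circleMap 0 1 θ * z)
      = ∫⁻ z in ball 0 r, ρ ‖z‖ * H z := fun θ => by
    have := setLIntegral_ball_comp_circle_mul (fun z => ρ ‖z‖ * H z) (Circle.exp θ) r
    simpa [circleMap_zero, Circle.coe_exp] using this
  refine (ENNReal.mul_le_mul_iff_right h2π ENNReal.ofReal_ne_top).mp ?_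
  calc ENNReal.ofReal (2 * π) * (c * ∫⁻ z in ball (0 : ℂ) r, ρ ‖z‖)
      = ∫⁻ z in ball 0 r, ρ ‖z‖ * (ENNReal.ofReal (2 * π) * c) := by
        rw [lintegral_mul_const _ (by fun_prop)]; ring
    _ ≤ ∫⁻ z in ball 0 r, ρ ‖z‖ * ∫⁻ θ in Ioc 0 (2 * π), H (circleMap 0 1 θ * z) :=
        setLIntegral_mono' measurableSet_ball fun z hz => mul_le_mul_right (hc z hz) _
    _ = ∫⁻ z in ball 0 r, ∫⁻ θ in Ioc 0 (2 * π), ρ ‖z‖ * H (circleMap 0 1 θ * z) :=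
        lintegral_congr fun z => (lintegral_const_mul _ (by fun_prop)).symm
    _ = ∫⁻ θ in Ioc 0 (2 * π), ∫⁻ z in ball 0 r, ρ ‖z‖ * H (circleMap 0 1 θ * z) :=
        lintegral_lintegral_swap (by fun_prop)
    _ = ENNReal.ofReal (2 * π) * ∫⁻ z in ball 0 r, ρ ‖z‖ * H z := by
        simp_rw [hinv, setLIntegral_const, Real.volume_Ioc, sub_zero, mul_comm]

/-- For `F` holomorphic on the unit disk and `g` measurable,
`|F′(0)|² ∫_𝔻 g(|z|)² dA ≤ ∫_𝔻 g(|z|)² |F′(z)|² dA`, as lower Lebesgue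
integrals with values in `[0,∞]`. -/
theorem derivative_at_center_bound
    (F : ℂ → ℂ) (hF : DifferentiableOn ℂ F (ball (0:ℂ) 1))
    (g : ℝ → ℝ) (hg : Measurable g) :
    ENNReal.ofReal (‖deriv F 0‖^2) *
        (∫⁻ z in ball (0:ℂ) 1, ENNReal.ofReal ((g ‖z‖)^2))
      ≤ ∫⁻ z in ball (0:ℂ) 1,
          ENNReal.ofReal ((g ‖z‖)^2 * ‖deriv F z‖^2) := by
  have hsq : DifferentiableOn ℂ (deriv F ^ 2) (ball 0 1) :=
    ((hF.analyticOnNhd isOpen_ball).deriv.differentiableOn).pow 2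
  have henorm : ∀ z, ENNReal.ofReal (‖deriv F z‖ ^ 2) = ‖(deriv F ^ 2) z‖ₑ := fun z => by
    rw [Pi.pow_apply, enorm_pow, ← ofReal_norm, ENNReal.ofReal_pow (norm_nonneg _)]
  calc ENNReal.ofReal (‖deriv F 0‖ ^ 2) * ∫⁻ z in ball (0 : ℂ) 1, ENNReal.ofReal (g ‖z‖ ^ 2)
      ≤ ∫⁻ z in ball (0 : ℂ) 1, ENNReal.ofReal (g ‖z‖ ^ 2) * ‖(deriv F ^ 2) z‖ₑ := by
        rw [henorm]
        exact mul_setLIntegral_ball_radial_le (ρ := fun t => ENNReal.ofReal (g t ^ 2))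
          (by fun_prop) (by fun_prop) fun z hz => hsq.two_pi_mul_enorm_le_lintegral_rotation hz
    _ = ∫⁻ z in ball (0 : ℂ) 1, ENNReal.ofReal (g ‖z‖ ^ 2 * ‖deriv F z‖ ^ 2) :=
        lintegral_congr fun z => by rw [ENNReal.ofReal_mul (sq_nonneg _), henorm]
end

section
/- Let F be holomorphic on the open unit disk 𝔻 with non-constant derivative F′, and let g : [0,1] → ℝ be measurable with 0 < ∫_𝔻 g(|z|)² dA(z) < ∞. Then the strict inequality |F′(0)|² · ∫_𝔻 g(|z|)² dA(z) < ∫_𝔻 g(|z|)² |F′(z)|² dA(z) holds (where the right-hand side may be +∞). -/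
/-!
Write `f = F'`. Expanding `‖f z‖² = ‖f 0‖² + 2 re ⟪f 0, f z - f 0⟫ + ‖f z - f 0‖²`, the mean value
property kills the cross term, so the average of `‖f‖²` over the circle `|z| = r` equals `‖f 0‖²`
plus the average of `‖f - f 0‖²`. The latter is positive for every `0 < r < 1`: otherwise `f` is
constant on that circle, hence on the disc it bounds (maximum modulus) and on all of `𝔻` (identity
theorem). Integrating in polar coordinates against the radial weight `r g(r)²`, whose mass is
positive and finite, keeps the inequality strict.
-/

open MeasureTheory Metric Set
open scoped ENNReal
open Real

theorem Real.circleAverage_pos_of_continuousOn {h : ℂ → ℝ} {c : ℂ} {r : ℝ}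
    (hc : ContinuousOn h (sphere c |r|)) (hnonneg : ∀ z ∈ sphere c |r|, 0 ≤ h z)
    (hpos : ∃ z ∈ sphere c |r|, 0 < h z) : 0 < circleAverage h c r := by
  have hcomp : ContinuousOn (fun θ => h (circleMap c r θ)) (Icc 0 (2 * π)) :=
    hc.comp (continuous_circleMap c r).continuousOn fun θ _ => circleMap_mem_sphere' c r θ
  obtain ⟨z, hz, hz0⟩ := hpos
  rw [← image_circleMap_Ioc] at hz
  obtain ⟨θ, hθ, rfl⟩ := hz
  rw [circleAverage_def, smul_eq_mul]
  exact mul_pos (by positivity) (intervalIntegral.integral_pos (by positivity) hcomp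
    (fun θ _ => hnonneg _ (circleMap_mem_sphere' c r θ)) ⟨θ, Ioc_subset_Icc_self hθ, hz0⟩)

theorem lintegral_Ioo_circleMap_eq_ofReal_circleAverage {h : ℂ → ℝ} {c : ℂ} {r : ℝ}
    (hc : ContinuousOn h (sphere c |r|)) (hnonneg : ∀ z ∈ sphere c |r|, 0 ≤ h z) :
    ∫⁻ θ in Ioo (-π) π, ENNReal.ofReal (h (circleMap c r θ))
      = ENNReal.ofReal (2 * π * circleAverage h c r) := by
  have hint : IntegrableOn (fun θ => h (circleMap c r θ)) (Ioc (-π) π) :=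
    (hc.comp (continuous_circleMap c r).continuousOn
      fun θ _ => circleMap_mem_sphere' c r θ).integrableOn_Icc.mono_set Ioc_subset_Icc_self
  rw [circleAverage_eq_integral_add (-π), intervalIntegral.integral_comp_add_right
    (fun θ => h (circleMap c r θ)), smul_eq_mul, ← mul_assoc,
    mul_inv_cancel₀ (by positivity), one_mul, zero_add, show 2 * π + -π = π by ring,
    intervalIntegral.integral_of_le (by linarith [pi_pos]),
    ofReal_integral_eq_lintegral_ofReal hint
      (Filter.Eventually.of_forall fun θ => hnonneg _ (circleMap_mem_sphere' c r θ)),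
    Measure.restrict_congr_set Ioo_ae_eq_Ioc]

theorem exists_mem_sphere_ne_of_differentiableOn {F : Type*} [NormedAddCommGroup F]
    [NormedSpace ℂ F] [CompleteSpace F] {f : ℂ → F} {c : ℂ} {r R : ℝ}
    (hf : DifferentiableOn ℂ f (ball c R)) (hr : 0 < r) (hrR : r < R)
    (hne : ∃ z ∈ ball c R, f z ≠ f c) : ∃ z ∈ sphere c r, f z ≠ f c := by
  by_contra! hsphere
  obtain ⟨z, hz, hfz⟩ := hne
  have hball : EqOn f (fun _ => f c) (ball c r) :=
    Complex.eqOn_of_eqOn_frontier isBounded_ball (hf.diffContOnCl_ball (closedBall_subset_ball hrR))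
      diffContOnCl_const (by rwa [frontier_ball c hr.ne'])
  exact hfz <| (hf.analyticOnNhd isOpen_ball).eqOn_of_preconnected_of_eventuallyEq
    analyticOnNhd_const (convex_ball c R).isPreconnected (mem_ball_self (hr.trans hrR))
    (Filter.eventually_of_mem (ball_mem_nhds c hr) hball) hz

section

variable {E : Type*} [NormedAddCommGroup E] [InnerProductSpace ℂ E] [CompleteSpace E]

theorem circleAverage_norm_sq_eq_add {f : ℂ → E} {c : ℂ} {r : ℝ}
    (hf : DifferentiableOn ℂ f (closedBall c |r|)) :
    circleAverage (fun z => ‖f z‖ ^ 2) c r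
      = ‖f c‖ ^ 2 + circleAverage (fun z => ‖f z - f c‖ ^ 2) c r := by
  have hcont : ContinuousOn (fun z => f z - f c) (sphere c |r|) :=
    (hf.continuousOn.mono sphere_subset_closedBall).sub continuousOn_const
  have hmean : circleAverage (fun z => f z - f c) c r = 0 := by
    rw [((hf.sub_const (f c)).diffContOnCl_ball subset_rfl).circleAverage, sub_self]
  let L : E →L[ℝ] ℝ := Complex.reCLM.comp ((innerSL ℂ (f c)).restrictScalars ℝ)
  have hcross : circleAverage (fun z => 2 * L (f z - f c)) c r = 0 := by
    rw [show (fun z => 2 * L (f z - f c)) = (2 : ℝ) • (L ∘ fun z => f z - f c) from rfl,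
      circleAverage_smul, L.circleAverage_comp_comm hcont.circleIntegrable', hmean, map_zero,
      smul_zero]
  have hexpand : (fun z => ‖f z‖ ^ 2)
      = fun z => ‖f c‖ ^ 2 + (2 * L (f z - f c) + ‖f z - f c‖ ^ 2) := by
    funext z
    simpa [L, add_assoc] using norm_add_sq (𝕜 := ℂ) (f c) (f z - f c)
  rw [hexpand, circleAverage_fun_add (circleIntegrable_const _ _ _), circleAverage_const,
    circleAverage_fun_add, hcross, zero_add]
  · exact ((L.continuous.comp_continuousOn hcont).const_smul (2 : ℝ)).circleIntegrable'
  · exact (hcont.norm.pow 2).circleIntegrable'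
  · exact (((L.continuous.comp_continuousOn hcont).const_smul (2 : ℝ)).add
      (hcont.norm.pow 2)).circleIntegrable'

theorem norm_sq_lt_circleAverage_norm_sq {f : ℂ → E} {c : ℂ} {r R : ℝ}
    (hf : DifferentiableOn ℂ f (ball c R)) (hr : 0 < r) (hrR : r < R)
    (hne : ∃ z ∈ ball c R, f z ≠ f c) :
    ‖f c‖ ^ 2 < circleAverage (fun z => ‖f z‖ ^ 2) c r := by
  have hclosed : closedBall c |r| ⊆ ball c R := by
    rw [abs_of_pos hr]; exact closedBall_subset_ball hrR
  obtain ⟨z, hz, hfz⟩ := exists_mem_sphere_ne_of_differentiableOn hf hr hrR hne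
  rw [circleAverage_norm_sq_eq_add (hf.mono hclosed)]
  refine lt_add_of_pos_right _
    (Real.circleAverage_pos_of_continuousOn ?_ (fun _ _ => by positivity)
      ⟨z, by rwa [abs_of_pos hr], pow_pos (norm_pos_iff.2 (sub_ne_zero.2 hfz)) 2⟩)
  exact ((hf.continuousOn.mono (sphere_subset_closedBall.trans hclosed)).sub
    continuousOn_const).norm.pow 2

theorem ofReal_two_pi_mul_norm_sq_lt_lintegral_circleMap {f : ℂ → E} {c : ℂ} {r R : ℝ}
    (hf : DifferentiableOn ℂ f (ball c R)) (hr : 0 < r) (hrR : r < R)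
    (hne : ∃ z ∈ ball c R, f z ≠ f c) :
    ENNReal.ofReal (2 * π * ‖f c‖ ^ 2)
      < ∫⁻ θ in Ioo (-π) π, ENNReal.ofReal (‖f (circleMap c r θ)‖ ^ 2) := by
  have hsphere : sphere c |r| ⊆ ball c R := sphere_subset_ball (by rwa [abs_of_pos hr])
  rw [lintegral_Ioo_circleMap_eq_ofReal_circleAverage (h := fun z => ‖f z‖ ^ 2)
    ((hf.continuousOn.mono hsphere).norm.pow 2) (fun _ _ => by positivity),
    ENNReal.ofReal_lt_ofReal_iff_of_nonneg (by positivity)]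
  exact mul_lt_mul_of_pos_left (norm_sq_lt_circleAverage_norm_sq hf hr hrR hne) two_pi_pos

end

theorem lintegral_ball_zero_eq_lintegral_circleMap (φ : ℂ → ℝ≥0∞) (hφ : Measurable φ) (R : ℝ) :
    ∫⁻ z in ball (0 : ℂ) R, φ z
      = ∫⁻ r in Ioo 0 R, ENNReal.ofReal r * ∫⁻ θ in Ioo (-π) π, φ (circleMap 0 r θ) := by
  set Φ : ℝ × ℝ → ℂ := fun p => circleMap 0 p.1 p.2
  have hΦ : ∀ p, Complex.polarCoord.symm p = Φ p := fun p => by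
    simp [Φ, circleMap, Complex.exp_mul_I]
  have hpre : MeasurableSet (Φ ⁻¹' ball 0 R) :=
    measurableSet_ball.preimage circleMap.continuous.measurable
  have hset : Φ ⁻¹' ball 0 R ∩ polarCoord.target = Ioo 0 R ×ˢ Ioo (-π) π := by
    ext ⟨r, θ⟩
    simp only [Φ, polarCoord_target, mem_inter_iff, mem_preimage, mem_ball_zero_iff,
      norm_circleMap_zero, mem_prod, mem_Ioi, mem_Ioo]
    constructor
    · rintro ⟨hR, hr, hθ⟩; exact ⟨⟨hr, (le_abs_self r).trans_lt hR⟩, hθ⟩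
    · rintro ⟨⟨hr, hR⟩, hθ⟩; exact ⟨by rwa [abs_of_pos hr], hr, hθ⟩
  calc ∫⁻ z in ball (0 : ℂ) R, φ z
      = ∫⁻ p in polarCoord.target, ENNReal.ofReal p.1 • (ball 0 R).indicator φ (Φ p) := by
        rw [← lintegral_indicator measurableSet_ball, ← Complex.lintegral_comp_polarCoord_symm]
        simp_rw [hΦ]
    _ = ∫⁻ p in Ioo 0 R ×ˢ Ioo (-π) π, ENNReal.ofReal p.1 * φ (Φ p) := by
        rw [← hset, ← Measure.restrict_restrict hpre, ← lintegral_indicator hpre]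
        congr 1 with p
        by_cases hp : Φ p ∈ ball 0 R <;> simp [hp]
    _ = ∫⁻ r in Ioo 0 R, ∫⁻ θ in Ioo (-π) π, ENNReal.ofReal r * φ (circleMap 0 r θ) := by
        rw [Measure.volume_eq_prod, ← Measure.prod_restrict, lintegral_prod]
        exact ((ENNReal.measurable_ofReal.comp measurable_fst).mul
          (hφ.comp circleMap.continuous.measurable)).aemeasurable
    _ = _ := by
        simp_rw [lintegral_const_mul' _ _ ENNReal.ofReal_ne_top]

theorem lintegral_ball_zero_radial_mul (ρ : ℝ → ℝ≥0∞) (φ : ℂ → ℝ≥0∞) (hρ : Measurable ρ)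
    (hφ : Measurable φ) (R : ℝ) :
    ∫⁻ z in ball (0 : ℂ) R, ρ ‖z‖ * φ z
      = ∫⁻ r in Ioo 0 R, ENNReal.ofReal r * ρ r * ∫⁻ θ in Ioo (-π) π, φ (circleMap 0 r θ) := by
  rw [lintegral_ball_zero_eq_lintegral_circleMap (fun z => ρ ‖z‖ * φ z)
    ((hρ.comp measurable_norm).mul hφ)]
  refine setLIntegral_congr_fun measurableSet_Ioo fun r hr => ?_
  simp_rw [norm_circleMap_zero, abs_of_pos hr.1]
  rw [lintegral_const_mul (f := fun θ => φ (circleMap 0 r θ)) _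
    (hφ.comp (continuous_circleMap 0 r).measurable), mul_assoc]

theorem lintegral_ball_zero_radial (ρ : ℝ → ℝ≥0∞) (hρ : Measurable ρ) (R : ℝ) :
    ∫⁻ z in ball (0 : ℂ) R, ρ ‖z‖
      = (∫⁻ r in Ioo 0 R, ENNReal.ofReal r * ρ r) * ENNReal.ofReal (2 * π) := by
  have h := lintegral_ball_zero_radial_mul ρ (fun _ => 1) hρ measurable_const R
  simp only [mul_one, setLIntegral_const, one_mul, Real.volume_Ioo] at h
  rw [h, lintegral_mul_const' _ _ ENNReal.ofReal_ne_top, sub_neg_eq_add, two_mul]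

theorem const_mul_lintegral_lt_lintegral_mul {α : Type*} [MeasurableSpace α] {μ : Measure α}
    {w M : α → ℝ≥0∞} {c : ℝ≥0∞} (hw : AEMeasurable w μ) (hM : AEMeasurable M μ)
    (hw0 : ∫⁻ x, w x ∂μ ≠ 0) (hwtop : ∫⁻ x, w x ∂μ ≠ ∞) (hc : c ≠ ∞)
    (hlt : ∀ᵐ x ∂μ, c < M x) : c * ∫⁻ x, w x ∂μ < ∫⁻ x, w x * M x ∂μ := by
  have hw_ne : ∃ᵐ x ∂μ, w x ≠ 0 := by
    rwa [Ne, lintegral_eq_zero_iff' hw, Filter.EventuallyEq, Filter.not_eventually] at hw0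
  rw [← lintegral_const_mul' c w hc]
  refine lintegral_strict_mono_of_ae_le_of_frequently_ae_lt (hw.mul hM)
    (by rw [lintegral_const_mul' c w hc]; exact ENNReal.mul_ne_top hc hwtop) ?_ ?_
  · filter_upwards [hlt] with x hx
    rw [mul_comm]
    exact mul_le_mul_right hx.le _
  · refine (hw_ne.and_eventually ((ae_lt_top' hw hwtop).and hlt)).mono ?_
    rintro x ⟨hx0, hxtop, hx⟩
    rw [mul_comm]
    exact (ENNReal.mul_lt_mul_right hx0 hxtop.ne hx).ne

/-- For `F` holomorphic on the unit disk with non-constant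
derivative and `g` measurable with `0 < ∫_𝔻 g(|z|)² dA < ∞`, the strict
inequality `|F′(0)|² ∫_𝔻 g(|z|)² dA < ∫_𝔻 g(|z|)² |F′(z)|² dA` holds
(the right side may be `+∞`). -/
theorem derivative_at_center_strict_bound
    (F : ℂ → ℂ) (hF : DifferentiableOn ℂ F (ball (0:ℂ) 1))
    (hnc : ¬ ∃ c : ℂ, ∀ z ∈ ball (0:ℂ) 1, deriv F z = c)
    (g : ℝ → ℝ) (hg : Measurable g)
    (hpos : 0 < ∫⁻ z in ball (0:ℂ) 1, ENNReal.ofReal ((g (‖z‖))^2))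
    (hfin : (∫⁻ z in ball (0:ℂ) 1, ENNReal.ofReal ((g (‖z‖))^2)) < ⊤) :
    ENNReal.ofReal ((‖deriv F 0‖)^2) *
        (∫⁻ z in ball (0:ℂ) 1, ENNReal.ofReal ((g (‖z‖))^2))
      < ∫⁻ z in ball (0:ℂ) 1,
          ENNReal.ofReal ((g (‖z‖))^2 * (‖deriv F z‖)^2) := by
  have hf : DifferentiableOn ℂ (deriv F) (ball 0 1) :=
    (hF.analyticOnNhd isOpen_ball).deriv.differentiableOn
  have hne : ∃ z ∈ ball (0 : ℂ) 1, deriv F z ≠ deriv F 0 := by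
    by_contra! h; exact hnc ⟨deriv F 0, h⟩
  have hρ : Measurable fun r => ENNReal.ofReal (g r ^ 2) :=
    ENNReal.measurable_ofReal.comp (hg.pow_const 2)
  have hφ : Measurable fun z => ENNReal.ofReal (‖deriv F z‖ ^ 2) :=
    ENNReal.measurable_ofReal.comp ((measurable_deriv F).norm.pow_const 2)
  have hπ : ENNReal.ofReal (2 * π) ≠ 0 := by simp [pi_pos]
  simp_rw [ENNReal.ofReal_mul (sq_nonneg _)]
  rw [lintegral_ball_zero_radial_mul _ _ hρ hφ 1]
  rw [lintegral_ball_zero_radial _ hρ 1] at hpos hfin ⊢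
  calc ENNReal.ofReal (‖deriv F 0‖ ^ 2)
        * ((∫⁻ r in Ioo 0 1, ENNReal.ofReal r * ENNReal.ofReal (g r ^ 2)) * ENNReal.ofReal (2 * π))
      = ENNReal.ofReal (2 * π * ‖deriv F 0‖ ^ 2)
          * ∫⁻ r in Ioo 0 1, ENNReal.ofReal r * ENNReal.ofReal (g r ^ 2) := by
        rw [ENNReal.ofReal_mul two_pi_pos.le]; ring
    _ < _ := const_mul_lintegral_lt_lintegral_mul (ENNReal.measurable_ofReal.mul hρ).aemeasurable
        (Measurable.lintegral_prod_right' (hφ.comp circleMap.continuous.measurable)).aemeasurable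
        (left_ne_zero_of_mul hpos.ne') (fun h => hfin.ne (by rw [h, ENNReal.top_mul hπ]))
        ENNReal.ofReal_ne_top ((ae_restrict_iff' measurableSet_Ioo).2 (Filter.Eventually.of_forall
          fun r hr => ofReal_two_pi_mul_norm_sq_lt_lintegral_circleMap hf hr.1 hr.2 hne))
end

section
/- Let γ : [0, 2π] → ℝ² be continuous with γ(0) = γ(2π), injective on [0, 2π), and of finite total variation (so J = γ([0,2π]) is a rectifiable Jordan curve). Suppose J is locally a Lipschitz graph: for every x ∈ J there exist an open ball B centered at x, a rotation ρ of ℝ², and a Lipschitz function b : ℝ → ℝ such that B ∩ J = B ∩ ρ({(t, b(t)) : t ∈ ℝ}). Then J has the chord–arc property: there exists a constant C such that for all s, t ∈ [0, 2π], the smaller of the lengths of the two arcs of J between γ(s) and γ(t) (i.e., the minimum of the total variation of γ on [min(s,t), max(s,t)] and the total variation of γ on the complementary pair of intervals [0, min(s,t)] ∪ [max(s,t), 2π]) is at most C · ‖γ(s) − γ(t)‖. -/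
/-!
By compactness of the set of parameter pairs `a ≤ s ≤ t ≤ b`, it suffices to bound the shorter
arc by a multiple of the chord for pairs near a fixed pair `(c₁, c₂)`. If `γ c₁ ≠ γ c₂`, the chord
stays bounded below while every arc is bounded by the total variation. Otherwise injectivity
forces `c₁ = c₂` or `(c₁, c₂) = (a, b)`, and then the short arc, respectively the complementary
arc through `γ a`, lies in a single chart: a Lipschitz line `φ : ℝ → E` with a 1-Lipschitz
retraction `ψ`. On such an arc `ψ ∘ γ` is continuous and injective, hence monotone, so the arc
has length at most `Lip φ · |ψ (γ s) - ψ (γ t)| ≤ Lip φ · dist (γ s) (γ t)`. For the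
complementary arc one also needs `ψ (γ a)` to lie between `ψ (γ s)` and `ψ (γ t)`, which follows
from the intermediate value theorem and injectivity.
-/

open Metric Set Filter Topology
open scoped Real NNReal ENNReal ComplexConjugate

lemma eVariationOn_Icc_le_edist_of_injOn {f : ℝ → ℝ} {s t : ℝ} (hst : s ≤ t)
    (hf : ContinuousOn f (Icc s t)) (hinj : InjOn f (Icc s t)) :
    eVariationOn f (Icc s t) ≤ edist (f s) (f t) := by
  have hs : s ∈ Icc s t := left_mem_Icc.2 hst
  have ht : t ∈ Icc s t := right_mem_Icc.2 hst
  rcases hf.strictMonoOn_of_injOn_Icc' hst hinj with hmono | hanti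
  · have h := hmono.monotoneOn.eVariationOn_eq hs ht
    rw [inter_self] at h
    rw [h, edist_dist, Real.dist_eq, abs_sub_comm]
    exact ENNReal.ofReal_le_ofReal (le_abs_self _)
  · have h : eVariationOn (-f) (Icc s t) = ENNReal.ofReal (f s - f t) := by
      have := hanti.antitoneOn.neg.eVariationOn_eq hs ht
      rw [inter_self, neg_sub_neg] at this
      exact this
    calc eVariationOn f (Icc s t) = eVariationOn (-(-f)) (Icc s t) := by rw [neg_neg]
      _ ≤ (1 : ℝ≥0) * eVariationOn (-f) (Icc s t) :=
        (LipschitzWith.id.neg).lipschitzOnWith.comp_eVariationOn_le (mapsTo_univ _ _)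
      _ ≤ edist (f s) (f t) := by
        rw [h, ENNReal.coe_one, one_mul, edist_dist, Real.dist_eq]
        exact ENNReal.ofReal_le_ofReal (le_abs_self _)

lemma edist_add_edist_of_mem_uIcc {x y z : ℝ} (h : y ∈ uIcc x z) :
    edist x y + edist y z = edist x z := by
  rw [← segment_eq_uIcc] at h
  simp only [edist_dist, ← ENNReal.ofReal_add dist_nonneg dist_nonneg,
    dist_add_dist_of_mem_segment h]

lemma apply_left_mem_uIcc_of_forall_ne {f : ℝ → ℝ} {a p q b : ℝ} (hap : a ≤ p) (hqb : q ≤ b)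
    (hf₁ : ContinuousOn f (Icc a p)) (hf₂ : ContinuousOn f (Icc q b)) (hab : f a = f b)
    (hne : ∀ u ∈ Icc a p, ∀ v ∈ Ico q b, f u ≠ f v) :
    f a ∈ uIcc (f p) (f q) := by
  by_contra hmid
  -- then one of `f p`, `f q` lies between `f a = f b` and the other, and the intermediate value
  -- theorem on the other piece produces a forbidden coincidence
  have hside : f p ∈ uIcc (f b) (f q) ∨ f q ∈ uIcc (f a) (f p) := by
    simp only [mem_uIcc, ← hab] at hmid ⊢
    grind
  rcases hside with hp | hq
  · rw [← uIcc_of_le hqb] at hf₂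
    obtain ⟨v, hv, hfv⟩ := intermediate_value_uIcc hf₂ (uIcc_comm (f q) (f b) ▸ hp)
    rw [uIcc_of_le hqb] at hv
    rcases hv.2.lt_or_eq with hvb | rfl
    · exact hne p ⟨hap, le_rfl⟩ v ⟨hv.1, hvb⟩ hfv.symm
    · exact hmid (hab ▸ hfv ▸ left_mem_uIcc)
  · rw [← uIcc_of_le hap] at hf₁
    obtain ⟨u, hu, hfu⟩ := intermediate_value_uIcc hf₁ hq
    rw [uIcc_of_le hap] at hu
    rcases hqb.lt_or_eq with hqb | rfl
    · exact hne u hu q ⟨le_rfl, hqb⟩ hfu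
    · exact hmid (hab ▸ right_mem_uIcc)

section LipschitzLine

variable {E : Type*} {φ : ℝ → E} {ψ : E → ℝ} {γ : ℝ → E} {s : Set ℝ}

lemma eqOn_comp_of_mapsTo_range (hψφ : Function.LeftInverse ψ φ) (hγ : MapsTo γ s (range φ)) :
    EqOn γ (φ ∘ ψ ∘ γ) s := by
  intro u hu
  obtain ⟨t, ht⟩ := hγ hu
  simp [← ht, hψφ t]

lemma Set.InjOn.comp_of_mapsTo_range (hψφ : Function.LeftInverse ψ φ) (hγ : MapsTo γ s (range φ))
    (hinj : InjOn γ s) : InjOn (ψ ∘ γ) s := fun u hu v hv h => by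
  apply hinj hu hv
  rw [eqOn_comp_of_mapsTo_range hψφ hγ hu, eqOn_comp_of_mapsTo_range hψφ hγ hv]
  exact congrArg φ h

variable [PseudoEMetricSpace E]

lemma eVariationOn_le_of_mapsTo_range {L : ℝ≥0} (hφ : LipschitzWith L φ)
    (hψφ : Function.LeftInverse ψ φ) (hγ : MapsTo γ s (range φ)) :
    eVariationOn γ s ≤ L * eVariationOn (ψ ∘ γ) s := by
  rw [eVariationOn.eq_of_eqOn (eqOn_comp_of_mapsTo_range hψφ hγ)]
  exact hφ.lipschitzOnWith.comp_eVariationOn_le (mapsTo_univ _ _)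

lemma eVariationOn_Icc_le_of_mapsTo_range {L : ℝ≥0} {p q : ℝ} (hpq : p ≤ q)
    (hφ : LipschitzWith L φ) (hψ : Continuous ψ) (hψφ : Function.LeftInverse ψ φ)
    (hcont : ContinuousOn γ (Icc p q)) (hinj : InjOn γ (Icc p q))
    (hγ : MapsTo γ (Icc p q) (range φ)) :
    eVariationOn γ (Icc p q) ≤ L * edist (ψ (γ p)) (ψ (γ q)) := by
  grw [eVariationOn_le_of_mapsTo_range hφ hψφ hγ, eVariationOn_Icc_le_edist_of_injOn hpq
    (hψ.comp_continuousOn hcont) (hinj.comp_of_mapsTo_range hψφ hγ)]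
  rfl

end LipschitzLine

section ClosedCurve

variable {E : Type*} {γ : ℝ → E} {a b : ℝ}

lemma Set.InjOn.Ioc_of_Ico (hinj : InjOn γ (Ico a b)) (hclosed : γ a = γ b) :
    InjOn γ (Ioc a b) := by
  have hb : ∀ u ∈ Ioc a b, γ u = γ b → u = b := fun u hu h => by
    by_contra hub
    have := hinj ⟨hu.1.le, lt_of_le_of_ne hu.2 hub⟩ ⟨le_rfl, hu.1.trans_le hu.2⟩
      (h.trans hclosed.symm)
    exact hu.1.ne' this
  intro u hu v hv h
  by_cases hub : u = b
  · subst hub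
    exact (hb v hv h.symm).symm
  by_cases hvb : v = b
  · exact (hb u hu (hvb ▸ h)).trans hvb.symm
  exact hinj ⟨hu.1.le, lt_of_le_of_ne hu.2 hub⟩ ⟨hv.1.le, lt_of_le_of_ne hv.2 hvb⟩ h

lemma Set.InjOn.Icc_of_Ico (hinj : InjOn γ (Ico a b)) (hclosed : γ a = γ b) {s t : ℝ}
    (has : a ≤ s) (htb : t ≤ b) (hst : t - s < b - a) : InjOn γ (Icc s t) := by
  rcases htb.lt_or_eq with htb | rfl
  · exact hinj.mono (Icc_subset_Ico has htb)
  · exact (hinj.Ioc_of_Ico hclosed).mono (Icc_subset_Ioc (by linarith) le_rfl)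

lemma eq_endpoints_of_apply_eq (hinj : InjOn γ (Ico a b)) (hclosed : γ a = γ b) {s t : ℝ}
    (has : a ≤ s) (hst : s < t) (htb : t ≤ b) (h : γ s = γ t) : s = a ∧ t = b := by
  have hsb : s ∈ Ico a b := ⟨has, hst.trans_le htb⟩
  have htb : t = b := by
    by_contra htb'
    exact hst.ne (hinj hsb ⟨has.trans hst.le, lt_of_le_of_ne htb htb'⟩ h)
  subst htb
  exact ⟨hinj hsb ⟨le_rfl, has.trans_lt hsb.2⟩ (h.trans hclosed.symm), rfl⟩

variable [PseudoEMetricSpace E] {φ : ℝ → E} {ψ : E → ℝ} {L : ℝ≥0}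

lemma eVariationOn_Icc_union_Icc_le (hφ : LipschitzWith L φ) (hψ : LipschitzWith 1 ψ)
    (hψφ : Function.LeftInverse ψ φ) (hcont : ContinuousOn γ (Icc a b))
    (hclosed : γ a = γ b) (hinj : InjOn γ (Ico a b)) {p q : ℝ} (hap : a ≤ p) (hpq : p < q)
    (hqb : q ≤ b) (hγ : MapsTo γ (Icc a p ∪ Icc q b) (range φ)) :
    eVariationOn γ (Icc a p ∪ Icc q b) ≤ (L + 1) * edist (γ p) (γ q) := by
  set f := ψ ∘ γ
  have hleft : Icc a p ⊆ Icc a b := Icc_subset_Icc le_rfl (hpq.le.trans hqb)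
  have hright : Icc q b ⊆ Icc a b := Icc_subset_Icc (hap.trans hpq.le) le_rfl
  have hvar_left : eVariationOn γ (Icc a p) ≤ L * edist (f a) (f p) :=
    eVariationOn_Icc_le_of_mapsTo_range hap hφ hψ.continuous hψφ (hcont.mono hleft)
      (hinj.mono (Icc_subset_Ico_right (hpq.trans_le hqb))) (hγ.mono_left subset_union_left)
  have hvar_right : eVariationOn γ (Icc q b) ≤ L * edist (f q) (f b) :=
    eVariationOn_Icc_le_of_mapsTo_range hqb hφ hψ.continuous hψφ (hcont.mono hright)
      ((hinj.Ioc_of_Ico hclosed).mono (Icc_subset_Ioc (hap.trans_lt hpq) le_rfl))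
      (hγ.mono_left subset_union_right)
  have hne : ∀ u ∈ Icc a p, ∀ v ∈ Ico q b, f u ≠ f v := fun u hu v hv h => by
    have hinj' := (hinj.mono (union_subset (Icc_subset_Ico_right (hpq.trans_le hqb))
      (Ico_subset_Ico_left (hap.trans hpq.le)))).comp_of_mapsTo_range hψφ
      (hγ.mono_left (union_subset_union_right _ Ico_subset_Icc_self))
    exact (hu.2.trans_lt (hpq.trans_le hv.1)).ne (hinj' (Or.inl hu) (Or.inr hv) h)
  have hmid : f a ∈ uIcc (f p) (f q) := apply_left_mem_uIcc_of_forall_ne hap hqb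
    (hψ.continuous.comp_continuousOn (hcont.mono hleft))
    (hψ.continuous.comp_continuousOn (hcont.mono hright)) (congrArg ψ hclosed) hne
  have hf_chord : edist (f p) (f q) ≤ edist (γ p) (γ q) := by
    simpa [f] using hψ.edist_le_mul (γ p) (γ q)
  calc eVariationOn γ (Icc a p ∪ Icc q b)
      = eVariationOn γ (Icc a p) + edist (γ p) (γ q) + eVariationOn γ (Icc q b) :=
        eVariationOn.union' γ (isGreatest_Icc hap) (isLeast_Icc hqb) hpq.le
    _ ≤ L * edist (f a) (f p) + edist (γ p) (γ q) + L * edist (f q) (f b) := by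
        gcongr
    _ = L * (edist (f p) (f a) + edist (f a) (f q)) + edist (γ p) (γ q) := by
        simp only [f, Function.comp_apply, hclosed, edist_comm (ψ (γ b))]
        ring
    _ ≤ (L + 1) * edist (γ p) (γ q) := by
        rw [edist_add_edist_of_mem_uIcc hmid, add_mul, one_mul]
        gcongr

end ClosedCurve

def LiesOnLipschitzLineNear {E : Type*} [PseudoMetricSpace E] (J : Set E) (x : E) : Prop :=
  ∃ ε > 0, ∃ (φ : ℝ → E) (ψ : E → ℝ) (L : ℝ≥0), LipschitzWith L φ ∧ LipschitzWith 1 ψ ∧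
    Function.LeftInverse ψ φ ∧ ball x ε ∩ J ⊆ range φ

noncomputable def shorterArcVariation {E : Type*} [PseudoEMetricSpace E] (γ : ℝ → E)
    (a b s t : ℝ) : ℝ≥0∞ :=
  min (eVariationOn γ (Icc s t)) (eVariationOn γ (Icc a s ∪ Icc t b))

def orderedPairs (a b : ℝ) : Set (ℝ × ℝ) := {y | a ≤ y.1 ∧ y.1 ≤ y.2 ∧ y.2 ≤ b}

lemma isCompact_orderedPairs (a b : ℝ) : IsCompact (orderedPairs a b) := by
  refine (isCompact_Icc (a := (a, a)) (b := (b, b))).of_isClosed_subset ?_ ?_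
  · exact (isClosed_le continuous_const continuous_fst).inter
      ((isClosed_le continuous_fst continuous_snd).inter
        (isClosed_le continuous_snd continuous_const))
  · rintro ⟨s, t⟩ ⟨has, hst, htb⟩
    exact ⟨⟨has, has.trans hst⟩, hst.trans htb, htb⟩

section ChordArc

variable {E : Type*} [MetricSpace E] {γ : ℝ → E} {a b : ℝ}

lemma eventually_shorterArcVariation_le_of_apply_ne (hcont : ContinuousOn γ (Icc a b))
    (hvar : eVariationOn γ (Icc a b) ≠ ⊤) {x : ℝ × ℝ} (hx : x ∈ orderedPairs a b)
    (hne : γ x.1 ≠ γ x.2) : ∃ C : ℝ≥0, ∀ᶠ y in 𝓝[orderedPairs a b] x,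
      shorterArcVariation γ a b y.1 y.2 ≤ C * edist (γ y.1) (γ y.2) := by
  set d := edist (γ x.1) (γ x.2) / 2
  have hd0 : d ≠ 0 := (ENNReal.half_pos (edist_pos.2 hne).ne').ne'
  have hdtop : d ≠ ⊤ := ENNReal.div_ne_top (edist_ne_top _ _) two_ne_zero
  have hfst : ∀ y ∈ orderedPairs a b, y.1 ∈ Icc a b := fun y hy => ⟨hy.1, hy.2.1.trans hy.2.2⟩
  have hsnd : ∀ y ∈ orderedPairs a b, y.2 ∈ Icc a b := fun y hy => ⟨hy.1.trans hy.2.1, hy.2.2⟩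
  have hchord : Tendsto (fun y : ℝ × ℝ => edist (γ y.1) (γ y.2)) (𝓝[orderedPairs a b] x)
      (𝓝 (edist (γ x.1) (γ x.2))) :=
    ((hcont x.1 (hfst x hx)).comp continuousWithinAt_fst hfst).tendsto.edist
      ((hcont x.2 (hsnd x hx)).comp continuousWithinAt_snd hsnd).tendsto
  refine ⟨(eVariationOn γ (Icc a b) / d).toNNReal, ?_⟩
  filter_upwards [self_mem_nhdsWithin,
    hchord.eventually_const_lt (ENNReal.half_lt_self (edist_pos.2 hne).ne' (edist_ne_top _ _))]
    with y hy hdy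
  rw [ENNReal.coe_toNNReal (ENNReal.div_ne_top hvar hd0)]
  calc shorterArcVariation γ a b y.1 y.2 ≤ eVariationOn γ (Icc y.1 y.2) := min_le_left _ _
    _ ≤ eVariationOn γ (Icc a b) := eVariationOn.mono γ (Icc_subset_Icc hy.1 hy.2.2)
    _ = eVariationOn γ (Icc a b) / d * d := (ENNReal.div_mul_cancel hd0 hdtop).symm
    _ ≤ eVariationOn γ (Icc a b) / d * edist (γ y.1) (γ y.2) := by gcongr

lemma eventually_shorterArcVariation_le_of_diag (hab : a < b) (hcont : ContinuousOn γ (Icc a b))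
    (hclosed : γ a = γ b) (hinj : InjOn γ (Ico a b)) {c : ℝ} (hc : c ∈ Icc a b)
    (hline : LiesOnLipschitzLineNear (γ '' Icc a b) (γ c)) :
    ∃ C : ℝ≥0, ∀ᶠ y in 𝓝[orderedPairs a b] (c, c),
      shorterArcVariation γ a b y.1 y.2 ≤ C * edist (γ y.1) (γ y.2) := by
  obtain ⟨ε, hε, φ, ψ, L, hφ, hψ, hψφ, hJ⟩ := hline
  obtain ⟨δ, hδ, hδε⟩ := Metric.mem_nhdsWithin_iff.1 (hcont c hc (ball_mem_nhds _ hε))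
  set r := min δ ((b - a) / 2)
  have hr : 0 < r := lt_min hδ (by linarith)
  refine ⟨L, ?_⟩
  filter_upwards [self_mem_nhdsWithin, mem_nhdsWithin_of_mem_nhds (ball_mem_nhds (c, c) hr)]
    with ⟨s, t⟩ ⟨has, hst, htb⟩ hy
  rw [← ball_prod_same, mem_prod, Real.ball_eq_Ioo] at hy
  dsimp only at has hst htb hy ⊢
  have hrδ : r ≤ δ := min_le_left _ _
  have hrab : r ≤ (b - a) / 2 := min_le_right _ _
  have harc : Icc s t ⊆ ball c δ ∩ Icc a b := fun u hu => by
    rw [Real.ball_eq_Ioo]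
    exact ⟨⟨by linarith [hu.1, hy.1.1], by linarith [hu.2, hy.2.2]⟩, has.trans hu.1, hu.2.trans htb⟩
  have hmaps : MapsTo γ (Icc s t) (range φ) := fun u hu =>
    hJ ⟨hδε (harc hu), mem_image_of_mem γ (harc hu).2⟩
  calc shorterArcVariation γ a b s t ≤ eVariationOn γ (Icc s t) := min_le_left _ _
    _ ≤ L * edist (ψ (γ s)) (ψ (γ t)) :=
      eVariationOn_Icc_le_of_mapsTo_range hst hφ hψ.continuous hψφ
        (hcont.mono fun u hu => (harc hu).2)
        (hinj.Icc_of_Ico hclosed has htb (by linarith [hy.1.1, hy.2.2])) hmaps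
    _ ≤ L * edist (γ s) (γ t) := by
      gcongr
      simpa using hψ.edist_le_mul (γ s) (γ t)

lemma eventually_shorterArcVariation_le_of_endpoints (hab : a < b)
    (hcont : ContinuousOn γ (Icc a b)) (hclosed : γ a = γ b) (hinj : InjOn γ (Ico a b))
    (hline : LiesOnLipschitzLineNear (γ '' Icc a b) (γ a)) :
    ∃ C : ℝ≥0, ∀ᶠ y in 𝓝[orderedPairs a b] (a, b),
      shorterArcVariation γ a b y.1 y.2 ≤ C * edist (γ y.1) (γ y.2) := by
  obtain ⟨ε, hε, φ, ψ, L, hφ, hψ, hψφ, hJ⟩ := hline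
  obtain ⟨δa, hδa, hδaε⟩ :=
    Metric.mem_nhdsWithin_iff.1 (hcont a (left_mem_Icc.2 hab.le) (ball_mem_nhds _ hε))
  obtain ⟨δb, hδb, hδbε⟩ :=
    Metric.mem_nhdsWithin_iff.1 (hcont b (right_mem_Icc.2 hab.le) (ball_mem_nhds _ hε))
  set r := min (min δa δb) ((b - a) / 2)
  have hr : 0 < r := lt_min (lt_min hδa hδb) (by linarith)
  refine ⟨L + 1, ?_⟩
  filter_upwards [self_mem_nhdsWithin, mem_nhdsWithin_of_mem_nhds (ball_mem_nhds (a, b) hr)]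
    with ⟨s, t⟩ ⟨has, _, htb⟩ hy
  rw [← ball_prod_same, mem_prod, Real.ball_eq_Ioo, Real.ball_eq_Ioo] at hy
  dsimp only at has htb hy ⊢
  have hrδa : r ≤ δa := (min_le_left _ _).trans (min_le_left _ _)
  have hrδb : r ≤ δb := (min_le_left _ _).trans (min_le_right _ _)
  have hrab : r ≤ (b - a) / 2 := min_le_right _ _
  have hmaps : MapsTo γ (Icc a s ∪ Icc t b) (range φ) := by
    rintro u (hu | hu)
    · have hu' : u ∈ ball a δa ∩ Icc a b := by
        rw [Real.ball_eq_Ioo]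
        exact ⟨⟨by linarith [hu.1], by linarith [hu.2, hy.1.2]⟩, hu.1, by linarith [hu.2, hy.1.2]⟩
      exact hJ ⟨hδaε hu', mem_image_of_mem γ hu'.2⟩
    · have hu' : u ∈ ball b δb ∩ Icc a b := by
        rw [Real.ball_eq_Ioo]
        exact ⟨⟨by linarith [hu.1, hy.2.1], by linarith [hu.2]⟩, by linarith [hu.1, hy.2.1], hu.2⟩
      exact hJ ⟨hclosed ▸ hδbε hu', mem_image_of_mem γ hu'.2⟩
  exact (min_le_right _ _).trans (eVariationOn_Icc_union_Icc_le hφ hψ hψφ hcont hclosed hinj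
    has (by linarith [hy.1.2, hy.2.1]) htb hmaps)

theorem exists_shorterArcVariation_le_mul_edist (hab : a < b) (hcont : ContinuousOn γ (Icc a b))
    (hclosed : γ a = γ b) (hinj : InjOn γ (Ico a b)) (hvar : eVariationOn γ (Icc a b) ≠ ⊤)
    (hline : ∀ x ∈ γ '' Icc a b, LiesOnLipschitzLineNear (γ '' Icc a b) x) :
    ∃ C : ℝ≥0, ∀ ⦃s t⦄, a ≤ s → s ≤ t → t ≤ b →
      shorterArcVariation γ a b s t ≤ C * edist (γ s) (γ t) := by
  have hlocal : ∀ x ∈ orderedPairs a b, ∃ C : ℝ≥0, ∀ᶠ y in 𝓝[orderedPairs a b] x,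
      shorterArcVariation γ a b y.1 y.2 ≤ C * edist (γ y.1) (γ y.2) := by
    rintro ⟨s, t⟩ hx
    obtain ⟨has, hst, htb⟩ : a ≤ s ∧ s ≤ t ∧ t ≤ b := hx
    by_cases hne : γ s = γ t
    swap
    · exact eventually_shorterArcVariation_le_of_apply_ne hcont hvar ⟨has, hst, htb⟩ hne
    rcases hst.lt_or_eq with hst | rfl
    · obtain ⟨rfl, rfl⟩ := eq_endpoints_of_apply_eq hinj hclosed has hst htb hne
      exact eventually_shorterArcVariation_le_of_endpoints hab hcont hclosed hinj
        (hline _ (mem_image_of_mem γ (left_mem_Icc.2 hab.le)))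
    · exact eventually_shorterArcVariation_le_of_diag hab hcont hclosed hinj ⟨has, htb⟩
        (hline _ (mem_image_of_mem γ ⟨has, htb⟩))
  obtain ⟨C, hC⟩ := (isCompact_orderedPairs a b).induction_on
    (p := fun V => ∃ C : ℝ≥0, ∀ y ∈ V,
      shorterArcVariation γ a b y.1 y.2 ≤ C * edist (γ y.1) (γ y.2))
    ⟨0, by simp⟩ (fun V W hVW ⟨C, hC⟩ => ⟨C, fun y hy => hC y (hVW hy)⟩)
    (fun V W ⟨C, hC⟩ ⟨D, hD⟩ => ⟨max C D, fun y hy => by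
      rcases hy with hy | hy
      · exact (hC y hy).trans (by gcongr; exact le_max_left C D)
      · exact (hD y hy).trans (by gcongr; exact le_max_right C D)⟩)
    (fun x hx => by
      obtain ⟨C, hC⟩ := hlocal x hx
      exact ⟨_, hC, C, fun y hy => hy⟩)
  exact ⟨C, fun s t has hst htb => hC (s, t) ⟨has, hst, htb⟩⟩

end ChordArc

section RotatedGraph

variable {w : ℂ} {g : ℝ → ℝ}

lemma lipschitzWith_rotatedGraph (hw : ‖w‖ = 1) {K : ℝ≥0} (hg : LipschitzWith K g) :
    LipschitzWith (1 + K) fun t : ℝ => w * ((t : ℂ) + (g t : ℂ) * Complex.I) := by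
  refine LipschitzWith.of_dist_le_mul fun t u => ?_
  have hgtu := hg.dist_le_mul t u
  rw [dist_eq_norm, ← mul_sub, norm_mul, hw, one_mul]
  calc ‖(t : ℂ) + (g t : ℂ) * Complex.I - ((u : ℂ) + (g u : ℂ) * Complex.I)‖
      = ‖((t - u : ℝ) : ℂ) + ((g t - g u : ℝ) : ℂ) * Complex.I‖ := by push_cast; ring_nf
    _ ≤ dist t u + dist (g t) (g u) := by
      refine (norm_add_le _ _).trans_eq ?_
      rw [norm_mul, Complex.norm_I, mul_one, Complex.norm_real, Complex.norm_real,
        Real.dist_eq, Real.dist_eq, Real.norm_eq_abs, Real.norm_eq_abs]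
    _ ≤ (1 + K) * dist t u := by linarith

lemma lipschitzWith_re_conj_mul (hw : ‖w‖ = 1) :
    LipschitzWith 1 fun z : ℂ => (conj w * z).re := by
  refine LipschitzWith.of_dist_le_mul fun z z' => ?_
  rw [Real.dist_eq, ← Complex.sub_re, ← mul_sub, NNReal.coe_one, one_mul, dist_eq_norm]
  refine (Complex.abs_re_le_norm _).trans_eq ?_
  rw [norm_mul, Complex.norm_conj, hw, one_mul]

lemma leftInverse_re_conj_mul (hw : ‖w‖ = 1) (g : ℝ → ℝ) :
    Function.LeftInverse (fun z : ℂ => (conj w * z).re)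
      fun t : ℝ => w * ((t : ℂ) + (g t : ℂ) * Complex.I) := fun t => by
  have hww : conj w * w = 1 := by rw [Complex.conj_mul', hw]; norm_num
  simp [← mul_assoc, hww]

lemma liesOnLipschitzLineNear_of_rotatedGraph {J : Set ℂ} {x : ℂ} (h : ∃ ε > (0:ℝ), ∃ w : ℂ,
    ‖w‖ = 1 ∧ ∃ b : ℝ → ℝ, (∃ K : NNReal, LipschitzWith K b) ∧
      ball x ε ∩ J = ball x ε ∩ (range fun t : ℝ => w * ((t : ℂ) + (b t : ℂ) * Complex.I))) :
    LiesOnLipschitzLineNear J x := by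
  obtain ⟨ε, hε, w, hw, b, ⟨K, hb⟩, hJ⟩ := h
  exact ⟨ε, hε, _, _, _, lipschitzWith_rotatedGraph hw hb, lipschitzWith_re_conj_mul hw,
    leftInverse_re_conj_mul hw b, hJ.trans_subset inter_subset_right⟩

end RotatedGraph

/-- A rectifiable Jordan curve in the plane (identified with `ℂ`)
that is locally the graph of a Lipschitz function (up to a rotation, i.e.
multiplication by a unimodular complex number) has the chord–arc property:
the shorter arc between two points has length at most a constant times the
distance between the points. -/
theorem lipschitz_jordan_curve_chord_arc
    (γ : ℝ → ℂ)
    (hcont : ContinuousOn γ (Icc (0:ℝ) (2 * π)))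
    (hclosed : γ 0 = γ (2 * π))
    (hinj : InjOn γ (Ico (0:ℝ) (2 * π)))
    (hrect : eVariationOn γ (Icc (0:ℝ) (2 * π)) < ⊤)
    (J : Set ℂ) (hJ : J = γ '' Icc (0:ℝ) (2 * π))
    (hgraph : ∀ x ∈ J, ∃ ε > (0:ℝ), ∃ w : ℂ, ‖w‖ = 1 ∧
      ∃ b : ℝ → ℝ, (∃ K : NNReal, LipschitzWith K b) ∧
        ball x ε ∩ J =
          ball x ε ∩ (range fun t : ℝ => w * ((t : ℂ) + (b t : ℂ) * Complex.I))) :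
    ∃ C : ℝ, ∀ s ∈ Icc (0:ℝ) (2 * π), ∀ t ∈ Icc (0:ℝ) (2 * π),
      min (eVariationOn γ (Icc (min s t) (max s t)))
          (eVariationOn γ (Icc (0:ℝ) (min s t) ∪ Icc (max s t) (2 * π)))
        ≤ ENNReal.ofReal (C * ‖γ s - γ t‖) := by
  subst hJ
  obtain ⟨C, hC⟩ := exists_shorterArcVariation_le_mul_edist Real.two_pi_pos hcont hclosed hinj
    hrect.ne fun x hx => liesOnLipschitzLineNear_of_rotatedGraph (hgraph x hx)
  refine ⟨C, fun s hs t ht => ?_⟩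
  have h := hC (le_min hs.1 ht.1) min_le_max (max_le hs.2 ht.2)
  rw [ENNReal.ofReal_mul C.coe_nonneg, ENNReal.ofReal_coe_nnreal, ← dist_eq_norm, ← edist_dist]
  rcases le_total s t with hst | hts
  · simpa [shorterArcVariation, hst] using h
  · simpa [shorterArcVariation, hts, edist_comm] using h
end
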